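/- arXiv:2501.05893 — 5 statements merged into one kernel-verified Lean document; each statement's English description precedes it below -/
import Mathlib

section
/- Let k̄ = (k_1,…,k_d) ∈ ℕ^d, m ∈ ℕ, ν_j > 0 and p̄^j ∈ [1,∞]^d for 1 ≤ j ≤ m, and let λ_j ≥ 0 with ∑_{j=1}^m λ_j = 1. Define p̄ ∈ [1,∞]^d coordinatewise by 1/p_i = ∑_{j=1}^m λ_j / p^j_i. Then ∩_{j=1}^m ν_j B_{p̄^j}^{k̄} ⊆ ν_1^{λ_1} ⋯ ν_m^{λ_m} B_{p̄}^{k̄}. -/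
open scoped ENNReal BigOperators
open Filter

/-- The `l_p` norm of a finite real vector, `p ∈ [1,∞]`. -/
noncomputable def lpNorm {ι : Type*} [Fintype ι] (p : ℝ≥0∞) (x : ι → ℝ) : ℝ :=
  if p = ∞ then ⨆ i, |x i| else (∑ i, |x i| ^ p.toReal) ^ (1 / p.toReal)

/-- The mixed norm on `ℝ^{k₁⋯k_d}`, defined recursively: for `d = 1` it is the
`l_{p₁}^{k₁}` norm, and for `d ≥ 2` one first takes the mixed norm in the first
`d-1` indices and then the `l_{p_d}^{k_d}` norm in the last index. -/
noncomputable def mixedNorm : (d : ℕ) → (k : Fin d → ℕ) → (p : Fin d → ℝ≥0∞) →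
    ((∀ i, Fin (k i)) → ℝ) → ℝ
  | 0, _, _, x => |x (fun i => i.elim0)|
  | d + 1, k, p, x =>
      lpNorm (p (Fin.last d)) (fun jd : Fin (k (Fin.last d)) =>
        mixedNorm d (fun i => k i.castSucc) (fun i => p i.castSucc)
          (fun y => x (Fin.snoc y jd)))

/-- The `l_q` norm (finite exponent `q`). -/
noncomputable def lqNorm {ι : Type*} [Fintype ι] (q : ℝ) (x : ι → ℝ) : ℝ :=
  (∑ i, |x i| ^ q) ^ (1 / q)

/-- The Kolmogorov `n`-width of `M` with respect to the norm `nrm`. -/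
noncomputable def kolWidth {ι : Type*} [Fintype ι] (n : ℕ) (M : Set (ι → ℝ))
    (nrm : (ι → ℝ) → ℝ) : ℝ :=
  ⨅ L : {L : Submodule ℝ (ι → ℝ) // Module.finrank ℝ L ≤ n},
    ⨆ x ∈ M, ⨅ y ∈ (L.1 : Set (ι → ℝ)), nrm (x - y)

/-- `Φ(p̄, k̄, q) = ∏_j k_j^{(1/q - 1/p_j)_+}`. -/
noncomputable def Phi {d : ℕ} (p : Fin d → ℝ≥0∞) (k : Fin d → ℕ) (q : ℝ) : ℝ :=
  ∏ j, (k j : ℝ) ^ max (1 / q - (1 / p j).toReal) 0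

/-- `∑_j λ_j / p_{α_j, i}`, the reciprocal of `θ_i(ᾱ, I)`. -/
noncomputable def thetaRecip {d m : ℕ} {A : Type*} (p : A → Fin d → ℝ≥0∞)
    (α : Fin m → A) (lam : Fin m → ℝ) (i : Fin d) : ℝ :=
  ∑ j, lam j * (1 / p (α j) i).toReal

/-- The vector `θ̄(ᾱ, I)`, given by `1/θ_i = ∑_j λ_j / p_{α_j, i}`. -/
noncomputable def theta {d m : ℕ} {A : Type*} (p : A → Fin d → ℝ≥0∞)
    (α : Fin m → A) (lam : Fin m → ℝ) (i : Fin d) : ℝ≥0∞ :=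
  (ENNReal.ofReal (thetaRecip p α lam i))⁻¹

/-- `(I, λ)` witnesses that `ᾱ ∈ 𝒩_m`: `#I = m - 1`, the `λ_j` are positive and sum to `1`,
`∑_j λ_j / p_{α_j, i} = 1/q` for `i ∈ I`, and the points `((1/p_{α_j,i})_{i∈I})_j`
are affinely independent. -/
def IsNWitness {d : ℕ} {A : Type*} (q : ℝ) (p : A → Fin d → ℝ≥0∞) {m : ℕ}
    (α : Fin m → A) (I : Finset (Fin d)) (lam : Fin m → ℝ) : Prop :=
  I.card = m - 1 ∧ (∀ j, 0 < lam j) ∧ ∑ j, lam j = 1 ∧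
    (∀ i ∈ I, thetaRecip p α lam i = 1 / q) ∧
    AffineIndependent ℝ (fun j : Fin m => fun i : I => (1 / p (α j) i).toReal)

/-- `Ψ({p̄_α}, k̄, q) = min_{1 ≤ m ≤ d+1} inf_{(ᾱ,I) : ᾱ ∈ 𝒩_m}
ν_{α_1}^{λ_1} ⋯ ν_{α_m}^{λ_m} Φ(θ̄(ᾱ,I), k̄, q)`. -/
noncomputable def Psi {d : ℕ} {A : Type*} (p : A → Fin d → ℝ≥0∞) (ν : A → ℝ)
    (k : Fin d → ℕ) (q : ℝ) : ℝ :=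
  sInf { r : ℝ | ∃ m, 1 ≤ m ∧ m ≤ d + 1 ∧ ∃ (α : Fin m → A) (I : Finset (Fin d))
    (lam : Fin m → ℝ), IsNWitness q p α I lam ∧
      r = (∏ j, ν (α j) ^ lam j) * Phi (theta p α lam) k q }

/-- The family `(p̄_α)_{α ∈ A}` is in general position. -/
def GeneralPosition {d : ℕ} {A : Type*} (q : ℝ) (p : A → Fin d → ℝ≥0∞) : Prop :=
  (∀ m, 2 ≤ m → m ≤ d + 1 → ∀ α : Fin m → A, Function.Injective α →
    ∀ I : Finset (Fin d), I.card = m - 1 →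
      AffineIndependent ℝ (fun j : Fin m => fun i : I => (1 / p (α j) i).toReal)) ∧
  (∀ m, 1 ≤ m → m ≤ d + 1 → ∀ (α : Fin m → A) (I : Finset (Fin d)) (lam : Fin m → ℝ),
    IsNWitness q p α I lam → ∀ i ∉ I, thetaRecip p α lam i ≠ 1 / q)

open scoped Classical in
/-- The 0–1 vector `x̂(s̄)` equal to `1` exactly on the box `{(i₁,…,i_d) : i_j < s_j}`. -/
noncomputable def xhat (d : ℕ) (k : Fin d → ℕ) (s : Fin d → ℕ) :
    (∀ i, Fin (k i)) → ℝ :=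
  fun idx => if ∀ i, (idx i : ℕ) < s i then 1 else 0

section Aux
variable {ι : Type*} [Fintype ι]

lemma lpNorm_nonneg (p : ℝ≥0∞) (x : ι → ℝ) : 0 ≤ lpNorm p x := by
  unfold lpNorm; split
  · exact Real.iSup_nonneg fun i => abs_nonneg _
  · exact Real.rpow_nonneg
      (Finset.sum_nonneg fun i _ => Real.rpow_nonneg (abs_nonneg _) _) _

lemma lpNorm_mono (p : ℝ≥0∞) {x y : ι → ℝ} (h : ∀ i, |x i| ≤ |y i|) :
    lpNorm p x ≤ lpNorm p y := by
  unfold lpNorm; split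
  · cases isEmpty_or_nonempty ι with
    | inl hι => rw [iSup_of_empty', iSup_of_empty']
    | inr hι => exact ciSup_mono (Set.Finite.bddAbove (Set.finite_range _)) h
  · refine Real.rpow_le_rpow
      (Finset.sum_nonneg fun i _ => Real.rpow_nonneg (abs_nonneg _) _)
      (Finset.sum_le_sum fun i _ =>
        Real.rpow_le_rpow (abs_nonneg _) (h i) ENNReal.toReal_nonneg) (by positivity)

lemma lpNorm_const_mul (p : ℝ≥0∞) (hp : 1 ≤ p) {c : ℝ} (hc : 0 ≤ c) (x : ι → ℝ) :
    lpNorm p (fun i => c * x i) = c * lpNorm p x := by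
  unfold lpNorm; split
  · simp_rw [abs_mul, abs_of_nonneg hc]
    exact (Real.mul_iSup_of_nonneg hc _).symm
  · rename_i hptop
    have ht : 0 < p.toReal :=
      ENNReal.toReal_pos (by intro h0; rw [h0] at hp; simp at hp) hptop
    simp_rw [abs_mul, abs_of_nonneg hc, Real.mul_rpow hc (abs_nonneg _), ← Finset.mul_sum]
    rw [Real.mul_rpow (Real.rpow_nonneg hc _)
      (Finset.sum_nonneg fun i _ => Real.rpow_nonneg (abs_nonneg _) _),
      ← Real.rpow_mul hc, mul_one_div, div_self ht.ne', Real.rpow_one]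

lemma ennreal_holder {κ : Type*} (s : Finset κ) (f : κ → ι → ℝ≥0∞) {w : κ → ℝ}
    (hw : ∑ j ∈ s, w j = 1) (h0 : ∀ j ∈ s, 0 ≤ w j) :
    ∑ i, ∏ j ∈ s, f j i ^ w j ≤ ∏ j ∈ s, (∑ i, f j i) ^ w j := by
  letI : MeasurableSpace ι := ⊤
  haveI : MeasurableSingletonClass ι := ⟨fun _ => trivial⟩
  have := ENNReal.lintegral_prod_norm_pow_le (μ := MeasureTheory.Measure.count) s
    (f := f) (fun j _ => (measurable_from_top).aemeasurable) hw h0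
  simpa [MeasureTheory.lintegral_count, tsum_fintype] using this

lemma real_holder_sum {κ : Type*} (s : Finset κ) (g : κ → ι → ℝ) (hg : ∀ j i, 0 ≤ g j i)
    {w : κ → ℝ} (hw : ∑ j ∈ s, w j = 1) (h0 : ∀ j ∈ s, 0 ≤ w j) :
    ∑ i, ∏ j ∈ s, g j i ^ w j ≤ ∏ j ∈ s, (∑ i, g j i) ^ w j := by
  rw [← ENNReal.ofReal_le_ofReal_iff (Finset.prod_nonneg fun j _ =>
    Real.rpow_nonneg (Finset.sum_nonneg fun i _ => hg j i) _)]
  have lhs : ENNReal.ofReal (∑ i, ∏ j ∈ s, g j i ^ w j)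
      = ∑ i, ∏ j ∈ s, (ENNReal.ofReal (g j i)) ^ w j := by
    rw [ENNReal.ofReal_sum_of_nonneg (fun i _ =>
      Finset.prod_nonneg fun j _ => Real.rpow_nonneg (hg j i) _)]
    refine Finset.sum_congr rfl fun i _ => ?_
    rw [ENNReal.ofReal_prod_of_nonneg (fun j _ => Real.rpow_nonneg (hg j i) _)]
    exact Finset.prod_congr rfl fun j hj =>
      (ENNReal.ofReal_rpow_of_nonneg (hg j i) (h0 j hj)).symm
  have rhs : ENNReal.ofReal (∏ j ∈ s, (∑ i, g j i) ^ w j)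
      = ∏ j ∈ s, (∑ i, ENNReal.ofReal (g j i)) ^ w j := by
    rw [ENNReal.ofReal_prod_of_nonneg (fun j _ =>
      Real.rpow_nonneg (Finset.sum_nonneg fun i _ => hg j i) _)]
    refine Finset.prod_congr rfl fun j hj => ?_
    rw [← ENNReal.ofReal_rpow_of_nonneg (Finset.sum_nonneg fun i _ => hg j i) (h0 j hj),
      ENNReal.ofReal_sum_of_nonneg (fun i _ => hg j i)]
  rw [lhs, rhs]
  exact ennreal_holder s _ hw h0

end Aux

section Aux2
variable {ι : Type*} [Fintype ι]

lemma lpNorm_prod_rpow_le {m : ℕ} (g : Fin m → ι → ℝ) (hg : ∀ j i, 0 ≤ g j i)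
    (pv : Fin m → ℝ≥0∞) (hpv : ∀ j, 1 ≤ pv j)
    (lam : Fin m → ℝ) (hlam : ∀ j, 0 ≤ lam j) (hsum : ∑ j, lam j = 1)
    (p : ℝ≥0∞) (hp : p⁻¹ = ∑ j, ENNReal.ofReal (lam j) * (pv j)⁻¹) :
    lpNorm p (fun i => ∏ j, g j i ^ lam j) ≤ ∏ j, lpNorm (pv j) (g j) ^ lam j := by
  classical
  set C : Fin m → ℝ := fun j => lpNorm (pv j) (g j) with hC
  have hC0 : ∀ j, 0 ≤ C j := fun j => lpNorm_nonneg _ _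
  have hbound : ∀ j, pv j = ∞ → ∀ i, g j i ≤ C j := by
    intro j hj i
    have h1 : |g j i| ≤ ⨆ i, |g j i| :=
      le_ciSup (f := fun i => |g j i|) (Set.Finite.bddAbove (Set.finite_range _)) i
    have h2 : C j = ⨆ i, |g j i| := by
      show lpNorm (pv j) (g j) = _
      unfold lpNorm; rw [if_pos hj]
    rw [h2]; exact (le_abs_self _).trans h1
  by_cases hptop : p = ∞
  · have hz : ∀ j, lam j = 0 ∨ pv j = ∞ := by
      intro j
      have h0 : (∑ j, ENNReal.ofReal (lam j) * (pv j)⁻¹) = 0 := by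
        rw [← hp, hptop]; simp
      have := (Finset.sum_eq_zero_iff).mp h0 j (Finset.mem_univ j)
      rcases mul_eq_zero.mp this with h | h
      · exact Or.inl (le_antisymm (by simpa [ENNReal.ofReal_eq_zero] using h) (hlam j))
      · exact Or.inr (ENNReal.inv_eq_zero.mp h)
    unfold lpNorm
    rw [if_pos hptop]
    refine Real.iSup_le (fun i => ?_)
      (Finset.prod_nonneg fun j _ => Real.rpow_nonneg (hC0 j) _)
    rw [abs_of_nonneg (Finset.prod_nonneg fun j _ => Real.rpow_nonneg (hg j i) _)]
    refine Finset.prod_le_prod (fun j _ => Real.rpow_nonneg (hg j i) _) (fun j _ => ?_)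
    rcases hz j with h | h
    · simp [h]
    · exact Real.rpow_le_rpow (hg j i) (hbound j h i) (hlam j)
  · have hp1 : 1 ≤ p := by
      rw [← ENNReal.inv_le_one, hp]
      calc ∑ j, ENNReal.ofReal (lam j) * (pv j)⁻¹
          ≤ ∑ j, ENNReal.ofReal (lam j) * 1 :=
            Finset.sum_le_sum fun j _ =>
              mul_le_mul_right (ENNReal.inv_le_one.mpr (hpv j)) _
        _ = ENNReal.ofReal (∑ j, lam j) := by
            rw [ENNReal.ofReal_sum_of_nonneg (fun j _ => hlam j)]; simp
        _ = 1 := by rw [hsum, ENNReal.ofReal_one]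
    have hpne0 : p ≠ 0 := by
      intro h; rw [h] at hp1; exact (by simp at hp1)
    have ht : 0 < p.toReal := ENNReal.toReal_pos hpne0 hptop
    set t := p.toReal with htd
    set s : Finset (Fin m) := Finset.univ.filter (fun j => lam j ≠ 0 ∧ pv j ≠ ∞) with hs
    have hmem : ∀ {j}, j ∈ s ↔ (lam j ≠ 0 ∧ pv j ≠ ∞) := by
      intro j; rw [hs, Finset.mem_filter]; simp
    have hts : ∀ j ∈ s, 0 < (pv j).toReal := by
      intro j hj
      refine ENNReal.toReal_pos ?_ (hmem.mp hj).2
      intro h; have := hpv j; rw [h] at this; simp at this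
    have hkey : t⁻¹ = ∑ j ∈ s, lam j * ((pv j).toReal)⁻¹ := by
      have h1 : (p⁻¹).toReal = t⁻¹ := by rw [ENNReal.toReal_inv]
      rw [← h1, hp]
      have h2 : (∑ j, ENNReal.ofReal (lam j) * (pv j)⁻¹)
          = ∑ j ∈ s, ENNReal.ofReal (lam j) * (pv j)⁻¹ := by
        symm; apply Finset.sum_subset (Finset.subset_univ s)
        intro j _ hj
        rw [hmem] at hj; push_neg at hj
        by_cases hl : lam j = 0
        · simp [hl]
        · rw [hj hl]; simp
      rw [h2, ENNReal.toReal_sum (fun j hj => ENNReal.mul_ne_top ENNReal.ofReal_ne_top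
        (ENNReal.inv_ne_top.mpr (fun h => by have := hpv j; rw [h] at this; simp at this)))]
      exact Finset.sum_congr rfl fun j hj => by
        rw [ENNReal.toReal_mul, ENNReal.toReal_ofReal (hlam j), ENNReal.toReal_inv]
    set w : Fin m → ℝ := fun j => lam j * t / (pv j).toReal with hwdef
    have hw0 : ∀ j ∈ s, 0 ≤ w j := fun j hj =>
      div_nonneg (mul_nonneg (hlam j) ht.le) (hts j hj).le
    have hwsum : ∑ j ∈ s, w j = 1 := by
      have h3 : ∑ j ∈ s, w j = t * ∑ j ∈ s, lam j * ((pv j).toReal)⁻¹ := by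
        rw [Finset.mul_sum]
        refine Finset.sum_congr rfl fun j hj => ?_
        show lam j * t / (pv j).toReal = t * (lam j * ((pv j).toReal)⁻¹)
        rw [div_eq_mul_inv]; ring
      rw [h3, ← hkey, mul_inv_cancel₀ ht.ne']
    set Cns : ℝ := ∏ j ∈ sᶜ, C j ^ lam j with hCns
    have hCns0 : 0 ≤ Cns := Finset.prod_nonneg fun j _ => Real.rpow_nonneg (hC0 j) _
    have hpoint : ∀ i, (∏ j, g j i ^ lam j) ≤ Cns * ∏ j ∈ s, g j i ^ lam j := by
      intro i
      rw [← Finset.prod_mul_prod_compl s (fun j => g j i ^ lam j), mul_comm]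
      refine mul_le_mul_of_nonneg_right ?_
        (Finset.prod_nonneg fun j _ => Real.rpow_nonneg (hg j i) _)
      refine Finset.prod_le_prod (fun j _ => Real.rpow_nonneg (hg j i) _) (fun j hj => ?_)
      rw [Finset.mem_compl, hmem] at hj; push_neg at hj
      by_cases hl : lam j = 0
      · simp [hl]
      · exact Real.rpow_le_rpow (hg j i) (hbound j (hj hl) i) (hlam j)
    have step1 : lpNorm p (fun i => ∏ j, g j i ^ lam j)
        ≤ Cns * lpNorm p (fun i => ∏ j ∈ s, g j i ^ lam j) := by
      rw [← lpNorm_const_mul p hp1 hCns0]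
      refine lpNorm_mono p fun i => ?_
      rw [abs_of_nonneg (Finset.prod_nonneg fun j _ => Real.rpow_nonneg (hg j i) _),
        abs_of_nonneg (mul_nonneg hCns0
          (Finset.prod_nonneg fun j _ => Real.rpow_nonneg (hg j i) _))]
      exact hpoint i
    have step2 : lpNorm p (fun i => ∏ j ∈ s, g j i ^ lam j) ≤ ∏ j ∈ s, C j ^ lam j := by
      have hH := real_holder_sum s (fun j i => g j i ^ (pv j).toReal)
        (fun j i => Real.rpow_nonneg (hg j i) _) hwsum hw0
      have hLHS : ∀ i, (∏ j ∈ s, (g j i ^ (pv j).toReal) ^ w j)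
          = (∏ j ∈ s, g j i ^ lam j) ^ t := by
        intro i
        rw [← Real.finset_prod_rpow s _ (fun j _ => Real.rpow_nonneg (hg j i) _) t]
        refine Finset.prod_congr rfl fun j hj => ?_
        rw [← Real.rpow_mul (hg j i), ← Real.rpow_mul (hg j i)]
        congr 1
        show (pv j).toReal * (lam j * t / (pv j).toReal) = lam j * t
        rw [mul_comm, div_mul_cancel₀ _ (hts j hj).ne']
      rw [show (fun i => ∏ j ∈ s, (g j i ^ (pv j).toReal) ^ w j)
        = fun i => (∏ j ∈ s, g j i ^ lam j) ^ t from funext hLHS] at hH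
      unfold lpNorm
      rw [if_neg hptop, ← htd]
      have habs : ∀ i, |∏ j ∈ s, g j i ^ lam j| = ∏ j ∈ s, g j i ^ lam j := fun i =>
        abs_of_nonneg (Finset.prod_nonneg fun j _ => Real.rpow_nonneg (hg j i) _)
      simp_rw [habs]
      calc (∑ i, (∏ j ∈ s, g j i ^ lam j) ^ t) ^ (1 / t)
          ≤ (∏ j ∈ s, (∑ i, g j i ^ (pv j).toReal) ^ w j) ^ (1 / t) := by
            refine Real.rpow_le_rpow (Finset.sum_nonneg fun i _ => Real.rpow_nonneg
              (Finset.prod_nonneg fun j _ => Real.rpow_nonneg (hg j i) _) _) hH (by positivity)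
        _ = ∏ j ∈ s, ((∑ i, g j i ^ (pv j).toReal) ^ w j) ^ (1 / t) := by
            rw [← Real.finset_prod_rpow s _ (fun j hj => Real.rpow_nonneg
              (Finset.sum_nonneg fun i _ => Real.rpow_nonneg (hg j i) _) _) (1 / t)]
        _ = ∏ j ∈ s, C j ^ lam j := by
            refine Finset.prod_congr rfl fun j hj => ?_
            have hsum0 : (0:ℝ) ≤ ∑ i, g j i ^ (pv j).toReal :=
              Finset.sum_nonneg fun i _ => Real.rpow_nonneg (hg j i) _
            have hCj : C j = (∑ i, g j i ^ (pv j).toReal) ^ (1 / (pv j).toReal) := by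
              show lpNorm (pv j) (g j) = _
              unfold lpNorm; rw [if_neg (hmem.mp hj).2]
              congr 1
              exact Finset.sum_congr rfl fun i _ => by rw [abs_of_nonneg (hg j i)]
            rw [hCj, ← Real.rpow_mul hsum0, ← Real.rpow_mul hsum0]
            congr 1
            show lam j * t / (pv j).toReal * (1 / t) = (1 / (pv j).toReal) * lam j
            have ht' : t ≠ 0 := ht.ne'
            have htj' : (pv j).toReal ≠ 0 := (hts j hj).ne'
            field_simp
    calc lpNorm p (fun i => ∏ j, g j i ^ lam j)
        ≤ Cns * lpNorm p (fun i => ∏ j ∈ s, g j i ^ lam j) := step1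
      _ ≤ Cns * ∏ j ∈ s, C j ^ lam j := by
          exact mul_le_mul_of_nonneg_left step2 hCns0
      _ = ∏ j, C j ^ lam j := by
          rw [hCns, mul_comm, Finset.prod_mul_prod_compl]

end Aux2

lemma mixedNorm_nonneg : ∀ (d : ℕ) (k : Fin d → ℕ) (p : Fin d → ℝ≥0∞)
    (x : (∀ i, Fin (k i)) → ℝ), 0 ≤ mixedNorm d k p x
  | 0, _, _, x => abs_nonneg _
  | _ + 1, _, _, _ => lpNorm_nonneg _ _

lemma mixedNorm_le_prod (d : ℕ) : ∀ (k : Fin d → ℕ) {m : ℕ},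
    ∀ (pv : Fin m → Fin d → ℝ≥0∞), (∀ j i, 1 ≤ pv j i) →
    ∀ (lam : Fin m → ℝ), (∀ j, 0 ≤ lam j) → (∑ j, lam j = 1) →
    ∀ (p : Fin d → ℝ≥0∞), (∀ i, (p i)⁻¹ = ∑ j, ENNReal.ofReal (lam j) * (pv j i)⁻¹) →
    ∀ (x : (∀ i, Fin (k i)) → ℝ),
    mixedNorm d k p x ≤ ∏ j, mixedNorm d k (pv j) x ^ lam j := by
  induction d with
  | zero =>
    intro k m pv hpv lam hlam hsum p hp x
    show |x _| ≤ ∏ j, |x _| ^ lam j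
    refine le_of_eq ?_
    calc |x fun i => i.elim0| = |x fun i => i.elim0| ^ (1:ℝ) := (Real.rpow_one _).symm
      _ = |x fun i => i.elim0| ^ (∑ j, lam j) := by rw [hsum]
      _ = ∏ j, |x fun i => i.elim0| ^ lam j :=
          Real.rpow_sum_of_nonneg (abs_nonneg _) (fun j _ => hlam j)
  | succ d ih =>
    intro k m pv hpv lam hlam hsum p hp x
    show lpNorm (p (Fin.last d)) (fun jd => mixedNorm d _ _ _) ≤ _
    set G : Fin m → Fin (k (Fin.last d)) → ℝ := fun j jd =>
      mixedNorm d (fun i => k i.castSucc) (fun i => pv j i.castSucc)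
        (fun y => x (Fin.snoc y jd)) with hG
    have hG0 : ∀ j jd, 0 ≤ G j jd := fun j jd => mixedNorm_nonneg _ _ _ _
    have hIH : ∀ jd, mixedNorm d (fun i => k i.castSucc) (fun i => p i.castSucc)
        (fun y => x (Fin.snoc y jd)) ≤ ∏ j, G j jd ^ lam j := fun jd =>
      ih _ (fun j i => pv j i.castSucc) (fun j i => hpv j _) lam hlam hsum
        (fun i => p i.castSucc) (fun i => hp _) _
    calc lpNorm (p (Fin.last d)) (fun jd => mixedNorm d (fun i => k i.castSucc)
          (fun i => p i.castSucc) (fun y => x (Fin.snoc y jd)))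
        ≤ lpNorm (p (Fin.last d)) (fun jd => ∏ j, G j jd ^ lam j) := by
          refine lpNorm_mono _ fun jd => ?_
          rw [abs_of_nonneg (mixedNorm_nonneg _ _ _ _),
            abs_of_nonneg (Finset.prod_nonneg fun j _ => Real.rpow_nonneg (hG0 j jd) _)]
          exact hIH jd
      _ ≤ ∏ j, lpNorm (pv j (Fin.last d)) (G j) ^ lam j :=
          lpNorm_prod_rpow_le G hG0 (fun j => pv j (Fin.last d)) (fun j => hpv j _)
            lam hlam hsum (p (Fin.last d)) (hp _)
      _ = ∏ j, mixedNorm (d+1) k (pv j) x ^ lam j := rfl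

/-- Hölder-type inclusion. If `1/p_i = ∑_j λ_j / p^j_i` with `λ_j ≥ 0`
summing to `1`, then `∩_j ν_j B_{p̄^j}^{k̄} ⊆ ν_1^{λ_1} ⋯ ν_m^{λ_m} B_{p̄}^{k̄}`. -/
theorem statement5 (d m : ℕ) (hm : 1 ≤ m) (k : Fin d → ℕ) (hk : ∀ i, 1 ≤ k i)
    (ν : Fin m → ℝ) (hν : ∀ j, 0 < ν j)
    (pv : Fin m → Fin d → ℝ≥0∞) (hpv : ∀ j i, 1 ≤ pv j i)
    (lam : Fin m → ℝ) (hlam : ∀ j, 0 ≤ lam j) (hsum : ∑ j, lam j = 1)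
    (p : Fin d → ℝ≥0∞)
    (hp : ∀ i, (p i)⁻¹ = ∑ j, ENNReal.ofReal (lam j) * (pv j i)⁻¹) :
    {x : (∀ i, Fin (k i)) → ℝ | ∀ j, mixedNorm d k (pv j) x ≤ ν j} ⊆
      {x : (∀ i, Fin (k i)) → ℝ | mixedNorm d k p x ≤ ∏ j, ν j ^ lam j} := by
  intro x hx
  calc mixedNorm d k p x ≤ ∏ j, mixedNorm d k (pv j) x ^ lam j :=
        mixedNorm_le_prod d k pv hpv lam hlam hsum p hp x
    _ ≤ ∏ j, ν j ^ lam j :=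
        Finset.prod_le_prod (fun j _ => Real.rpow_nonneg (mixedNorm_nonneg _ _ _ _) _)
          (fun j _ => Real.rpow_le_rpow (mixedNorm_nonneg _ _ _ _) (hx j) (hlam j))
end

section
/- Let m ≥ 2, let ξ_1,…,ξ_m ∈ ℝ^{m−1} be affinely independent points, and let η ∈ ℝ^{m−1} be such that for each j ∈ {1,…,m} the m points {ξ_1,…,ξ_{j−1},ξ_{j+1},…,ξ_m, η} are affinely independent. Set Δ = conv{ξ_1,…,ξ_m} and let a ∈ int Δ. Then there exists i ∈ {1,…,m} such that a ∈ conv{ξ_1,…,ξ_{i−1},ξ_{i+1},…,ξ_m, η}. -/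
open scoped ENNReal BigOperators
open Filter

/-!
Since `ξ` is an affine basis, `a` and `η` have barycentric coordinates `b` and `c`, with
`b ≥ 0` and `∑ c = 1`. Moving from `b` to `b - t c` for the largest `t ≥ 0` that keeps all
weights nonnegative (the ratio test of the simplex method) zeroes some weight `b_i - t c_i`,
and `a = ∑_j (b_j - t c_j) ξ_j + t η` then writes `a` as a convex combination of the points
with `ξ_i` replaced by `η`.
-/

open Finset

section ExchangeVertex

variable {𝕜 E ι : Type*} [Field 𝕜] [LinearOrder 𝕜] [IsStrictOrderedRing 𝕜]
  [AddCommGroup E] [Module 𝕜 E] [Fintype ι] [DecidableEq ι]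

theorem exists_update_mem_convexHull_of_sum_smul_eq (v : ι → E) {b c : ι → 𝕜}
    (hb₀ : ∀ j, 0 ≤ b j) (hb₁ : ∑ j, b j = 1) (hc₁ : ∑ j, c j = 1) {η : E}
    (hη : ∑ j, c j • v j = η) :
    ∃ i, ∑ j, b j • v j ∈ convexHull 𝕜 (Set.range (Function.update v i η)) := by
  obtain ⟨j₀, hj₀⟩ : ∃ j, 0 < c j := by
    by_contra! h
    linarith [sum_nonpos fun j (_ : j ∈ univ) => h j]
  obtain ⟨i, hi, hmin⟩ := ({j | 0 < c j} : Finset ι).exists_min_image (fun j => b j / c j)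
    ⟨j₀, by simpa using hj₀⟩
  rw [mem_filter_univ] at hi
  set t := b i / c i
  have ht₀ : 0 ≤ t := div_nonneg (hb₀ i) hi.le
  have hti : t * c i = b i := div_mul_cancel₀ _ hi.ne'
  have hstep : ∀ j, 0 ≤ b j - t * c j := fun j => by
    rcases le_or_gt (c j) 0 with hcj | hcj
    · nlinarith [hb₀ j]
    · have := hmin j (by simpa using hcj)
      rw [le_div_iff₀ hcj] at this
      linarith
  let w : ι → 𝕜 := fun j => b j - t * c j + (Pi.single i t : ι → 𝕜) j
  have hw_smul : ∀ j, w j • Function.update v i η j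
      = (b j - t * c j) • v j + (Pi.single i (t • η) : ι → E) j := fun j => by
    rcases eq_or_ne j i with rfl | hj
    · simp [w, hti]
    · simp [w, hj]
  refine ⟨i, ?_⟩
  convert (convex_convexHull 𝕜 _).sum_mem (t := univ) (w := w)
    (fun j _ => add_nonneg (hstep j) ((Pi.single_nonneg.2 ht₀ : (0 : ι → 𝕜) ≤ Pi.single i t) j))
    (by simp [w, sum_add_distrib, sum_sub_distrib, ← mul_sum, hb₁, hc₁])
    (fun j _ => subset_convexHull 𝕜 _ (Set.mem_range_self j)) using 1
  simp only [hw_smul, sum_add_distrib, sub_smul, sum_sub_distrib, mul_smul, ← smul_sum, hη,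
    sum_pi_single', mem_univ, if_true]
  abel

theorem AffineBasis.exists_update_mem_convexHull (B : AffineBasis ι 𝕜 E) {a : E}
    (ha : a ∈ convexHull 𝕜 (Set.range B)) (η : E) :
    ∃ i, a ∈ convexHull 𝕜 (Set.range (Function.update B i η)) := by
  rw [B.convexHull_eq_nonneg_coord] at ha
  simpa only [B.linear_combination_coord_eq_self] using
    exists_update_mem_convexHull_of_sum_smul_eq B ha (B.sum_coord_apply_eq_one a)
      (B.sum_coord_apply_eq_one η) (B.linear_combination_coord_eq_self η)

end ExchangeVertex

theorem statement7_general (m : ℕ) (hm : 2 ≤ m) (ξ : Fin m → (Fin (m - 1) → ℝ))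
    (hξ : AffineIndependent ℝ ξ) (η : Fin (m - 1) → ℝ)
    (a : Fin (m - 1) → ℝ)
    (ha : a ∈ interior (convexHull ℝ (Set.range ξ))) :
    ∃ i : Fin m, a ∈ convexHull ℝ (Set.range (Function.update ξ i η)) := by
  have hspan : affineSpan ℝ (Set.range ξ) = ⊤ :=
    hξ.affineSpan_eq_top_iff_card_eq_finrank_add_one.mpr (by simp; omega)
  exact AffineBasis.exists_update_mem_convexHull ⟨ξ, hξ, hspan⟩ (interior_subset ha) η

/-- Lemma on convex hulls. If `ξ_1, …, ξ_m ∈ ℝ^{m-1}` are affinely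
independent, `η` is such that each family obtained by replacing one `ξ_j` by `η` is
affinely independent, and `a` is interior to `conv{ξ_1,…,ξ_m}`, then `a` lies in some
`conv{ξ_1,…,ξ_{i-1},ξ_{i+1},…,ξ_m,η}`. -/
theorem statement7 (m : ℕ) (hm : 2 ≤ m) (ξ : Fin m → (Fin (m - 1) → ℝ))
    (hξ : AffineIndependent ℝ ξ) (η : Fin (m - 1) → ℝ)
    (hη : ∀ j : Fin m, AffineIndependent ℝ (Function.update ξ j η))
    (a : Fin (m - 1) → ℝ)
    (ha : a ∈ interior (convexHull ℝ (Set.range ξ))) :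
    ∃ i : Fin m, a ∈ convexHull ℝ (Set.range (Function.update ξ i η)) :=
  statement7_general m hm ξ hξ η a ha
end

section
/- Let d ∈ ℕ, k̄ = (k_1,…,k_d) ∈ ℕ^d, 1 ≤ q ≤ 2. Let A be a nonempty finite index set with ν_β > 0 and p̄_β ∈ [1,∞]^d for β ∈ A, with the family (p̄_β)_{β∈A} in general position, and let M = ∩_{β∈A} ν_β B_{p̄_β}^{k̄}. Suppose that the quantity Ψ({p̄_β}_{β∈A}, k̄, q) is attained with m = 1 at some α ∈ A, i.e., Ψ = ν_α ∏_{i=1}^d k_i^{(1/q − 1/p_{α,i})_+}. Let J = {i ∈ {1,…,d} : p_{α,i} > q}, set s_i = k_i for i ∈ J and s_i = 1 for i ∉ J, and let x̂(s̄) be the 0–1 vector equal to 1 exactly on the box {(i_1,…,i_d) : 1 ≤ i_j ≤ s_j}. Then ν_α s_1^{−1/p_{α,1}} ⋯ s_d^{−1/p_{α,d}} · x̂(s̄) ∈ M; equivalently, for every β ∈ A one has ν_α ∏_{i=1}^d s_i^{1/p_{β,i} − 1/p_{α,i}} ≤ ν_β. -/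
open scoped ENNReal BigOperators
open Filter

section Aux

lemma lpNorm_smul {ι : Type*} [Fintype ι] {p : ℝ≥0∞} (hp : 1 ≤ p) (c : ℝ) (x : ι → ℝ) :
    lpNorm p (c • x) = |c| * lpNorm p x := by
  unfold lpNorm
  by_cases h : p = ∞
  · simp only [h, if_pos rfl, Pi.smul_apply, smul_eq_mul, abs_mul, if_true]
    exact (Real.mul_iSup_of_nonneg (abs_nonneg c) _).symm
  · have hpt : 0 < p.toReal :=
      ENNReal.toReal_pos (lt_of_lt_of_le zero_lt_one hp).ne' h
    rw [if_neg h, if_neg h]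
    have : ∀ i, |(c • x) i| ^ p.toReal = |c| ^ p.toReal * |x i| ^ p.toReal := by
      intro i
      simp only [Pi.smul_apply, smul_eq_mul, abs_mul]
      exact Real.mul_rpow (abs_nonneg _) (abs_nonneg _)
    simp only [this]
    rw [← Finset.mul_sum, Real.mul_rpow (Real.rpow_nonneg (abs_nonneg _) _)
        (Finset.sum_nonneg fun i _ => Real.rpow_nonneg (abs_nonneg _) _),
      ← Real.rpow_mul (abs_nonneg _), mul_one_div_cancel hpt.ne', Real.rpow_one]

lemma mixedNorm_smul : ∀ (d : ℕ) (k : Fin d → ℕ) (p : Fin d → ℝ≥0∞),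
    (∀ i, 1 ≤ p i) → ∀ (c : ℝ) (x : (∀ i, Fin (k i)) → ℝ),
    mixedNorm d k p (c • x) = |c| * mixedNorm d k p x := by
  intro d
  induction d with
  | zero => intro k p _ c x; simp [mixedNorm, abs_mul]
  | succ d ih =>
    intro k p hp c x
    show lpNorm _ _ = |c| * lpNorm _ _
    have h2 := lpNorm_smul (hp (Fin.last d)) |c|
      (fun jd : Fin (k (Fin.last d)) =>
        mixedNorm d (fun i => k i.castSucc) (fun i => p i.castSucc)
          (fun y => x (Fin.snoc y jd)))
    rw [abs_abs] at h2
    rw [← h2]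
    congr 1
    funext jd
    have : (fun y => (c • x) (Fin.snoc y jd)) = c • (fun y => x (Fin.snoc y jd)) := rfl
    rw [this, ih _ _ (fun i => hp i.castSucc)]
    simp

open scoped Classical in
lemma lpNorm_indicator {n sn : ℕ} (hs1 : 1 ≤ sn) (hsn : sn ≤ n) {p : ℝ≥0∞} (hp : 1 ≤ p)
    (C : ℝ) (hC : 0 ≤ C) :
    lpNorm p (fun j : Fin n => if (j : ℕ) < sn then C else 0) =
      (sn : ℝ) ^ (1 / p).toReal * C := by
  have hne : (0 : ℕ) < n := lt_of_lt_of_le hs1 hsn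
  haveI : Nonempty (Fin n) := ⟨⟨0, hne⟩⟩
  unfold lpNorm
  by_cases h : p = ∞
  · rw [if_pos h, h]
    simp only [one_div, ENNReal.inv_top, ENNReal.toReal_zero, Real.rpow_zero, one_mul]
    apply le_antisymm
    · apply ciSup_le
      intro j
      by_cases hj : (j : ℕ) < sn <;> simp [hj, abs_of_nonneg hC, hC]
    · have hC' : C ≤ |if ((⟨0, hne⟩ : Fin n) : ℕ) < sn then C else 0| := by
        simp [Nat.lt_of_lt_of_le Nat.zero_lt_one hs1, abs_of_nonneg hC]
      exact hC'.trans (le_ciSup (f := fun j : Fin n => |if (j : ℕ) < sn then C else 0|)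
        (Finite.bddAbove_range _) (⟨0, hne⟩ : Fin n))
  · have hp0 : p ≠ 0 := (lt_of_lt_of_le zero_lt_one hp).ne'
    have hpt : 0 < p.toReal := ENNReal.toReal_pos hp0 h
    rw [if_neg h]
    have hcard : (Finset.univ.filter fun j : Fin n => (j : ℕ) < sn).card = sn := by
      have h1 : (Finset.univ.filter fun j : Fin n => (j : ℕ) < sn).card
          = (Finset.range sn).card := Finset.card_bij' (fun (j : Fin n) _ => (j : ℕ))
        (fun m hm => ⟨m, lt_of_lt_of_le (Finset.mem_range.mp hm) hsn⟩)
        (fun a ha => Finset.mem_range.mpr (Finset.mem_filter.mp ha).2)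
        (fun m hm => Finset.mem_filter.mpr ⟨Finset.mem_univ _, Finset.mem_range.mp hm⟩)
        (fun a ha => rfl) (fun m hm => rfl)
      simpa using h1
    have hsum : (∑ j : Fin n, |if (j : ℕ) < sn then C else 0| ^ p.toReal)
        = (sn : ℝ) * C ^ p.toReal := by
      have he : ∀ j : Fin n, |if (j : ℕ) < sn then C else 0| ^ p.toReal
          = if (j : ℕ) < sn then C ^ p.toReal else 0 := by
        intro j
        by_cases hj : (j : ℕ) < sn <;>
          simp [hj, abs_of_nonneg hC, Real.zero_rpow hpt.ne']
      simp only [he]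
      rw [Finset.sum_ite, Finset.sum_const, Finset.sum_const_zero, add_zero, hcard,
        nsmul_eq_mul]
    rw [hsum, Real.mul_rpow (Nat.cast_nonneg _) (Real.rpow_nonneg hC _),
      ← Real.rpow_mul hC, mul_one_div_cancel hpt.ne', Real.rpow_one]
    congr 2
    simp [one_div]

open scoped Classical in
lemma mixedNorm_box : ∀ (d : ℕ) (k : Fin d → ℕ) (p : Fin d → ℝ≥0∞) (s : Fin d → ℕ),
    (∀ i, 1 ≤ p i) → (∀ i, 1 ≤ s i) → (∀ i, s i ≤ k i) →
    mixedNorm d k p (xhat d k s) = ∏ i, (s i : ℝ) ^ (1 / p i).toReal := by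
  intro d
  induction d with
  | zero =>
    intro k p s _ _ _
    show |xhat 0 k s _| = _
    simp [xhat]
  | succ d ih =>
    intro k p s hp hs1 hsk
    show lpNorm _ _ = _
    have hinner : ∀ jd : Fin (k (Fin.last d)),
        (fun y => xhat (d + 1) k s (Fin.snoc y jd))
          = (if (jd : ℕ) < s (Fin.last d) then (1:ℝ) else 0) •
              xhat d (fun i => k i.castSucc) (fun i => s i.castSucc) := by
      intro jd
      funext y
      simp only [xhat, Pi.smul_apply, smul_eq_mul]
      by_cases hlast : (jd : ℕ) < s (Fin.last d)
      · rw [if_pos hlast, one_mul]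
        congr 1
        apply propext
        constructor
        · intro hall i; have := hall i.castSucc; rwa [Fin.snoc_castSucc] at this
        · intro hall i
          induction i using Fin.lastCases with
          | last => rw [Fin.snoc_last]; exact hlast
          | cast j => rw [Fin.snoc_castSucc]; exact hall j
      · rw [if_neg hlast, zero_mul, if_neg]
        intro hall
        exact hlast (by simpa using hall (Fin.last d))
    have hC : (0:ℝ) ≤ ∏ i : Fin d, ((s i.castSucc : ℕ) : ℝ) ^ (1 / p i.castSucc).toReal :=
      Finset.prod_nonneg fun i _ => Real.rpow_nonneg (Nat.cast_nonneg _) _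
    have hval : (fun jd : Fin (k (Fin.last d)) =>
        mixedNorm d (fun i => k i.castSucc) (fun i => p i.castSucc)
          (fun y => xhat (d + 1) k s (Fin.snoc y jd)))
        = fun jd : Fin (k (Fin.last d)) =>
            if (jd : ℕ) < s (Fin.last d)
            then ∏ i : Fin d, ((s i.castSucc : ℕ) : ℝ) ^ (1 / p i.castSucc).toReal
            else 0 := by
      funext jd
      rw [hinner jd, mixedNorm_smul d _ _ (fun i => hp i.castSucc),
        ih _ _ _ (fun i => hp i.castSucc) (fun i => hs1 i.castSucc) (fun i => hsk i.castSucc)]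
      by_cases hlast : (jd : ℕ) < s (Fin.last d) <;> simp [hlast]
    rw [hval, lpNorm_indicator (hs1 _) (hsk _) (hp _) _ hC, Fin.prod_univ_castSucc]
    ring

lemma one_div_theta_toReal {d m : ℕ} {A : Type*} (p : A → Fin d → ℝ≥0∞)
    (α : Fin m → A) (lam : Fin m → ℝ) (i : Fin d)
    (h : 0 ≤ thetaRecip p α lam i) :
    (1 / theta p α lam i).toReal = thetaRecip p α lam i := by
  rw [theta, one_div, inv_inv, ENNReal.toReal_ofReal h]

lemma thetaRecip_nonneg {d m : ℕ} {A : Type*} (p : A → Fin d → ℝ≥0∞)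
    (α : Fin m → A) (lam : Fin m → ℝ) (i : Fin d) (h : ∀ j, 0 ≤ lam j) :
    0 ≤ thetaRecip p α lam i :=
  Finset.sum_nonneg fun j _ => mul_nonneg (h j) ENNReal.toReal_nonneg

end Aux

set_option maxHeartbeats 1000000 in
open scoped Classical in
/-- the case `m = 1`. If `Ψ` is attained with `m = 1` at `α`,
`J = {i : p_{α,i} > q}`, `s_i = k_i` for `i ∈ J` and `s_i = 1` otherwise, then
`ν_α s_1^{-1/p_{α,1}} ⋯ s_d^{-1/p_{α,d}} x̂(s̄) ∈ M`; equivalently,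
`ν_α ∏_i s_i^{1/p_{β,i} - 1/p_{α,i}} ≤ ν_β` for every `β ∈ A`. -/
theorem statement11 (d : ℕ) (hd : 1 ≤ d) (k : Fin d → ℕ) (hk : ∀ i, 1 ≤ k i)
    (q : ℝ) (hq1 : 1 ≤ q) (hq2 : q ≤ 2)
    (A : Type) [Fintype A] [Nonempty A]
    (ν : A → ℝ) (hν : ∀ a, 0 < ν a) (p : A → Fin d → ℝ≥0∞) (hp : ∀ a i, 1 ≤ p a i)
    (hgen : GeneralPosition q p)
    (α : A) (hmin : Psi p ν k q = ν α * Phi (p α) k q)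
    (s : Fin d → ℕ)
    (hs : ∀ i, s i = if ENNReal.ofReal q < p α i then k i else 1) :
    (ν α * ∏ i, (s i : ℝ) ^ (-(1 / p α i).toReal)) • xhat d k s ∈
      {x : (∀ i, Fin (k i)) → ℝ | ∀ b, mixedNorm d k (p b) x ≤ ν b} ∧
    ∀ b : A, ν α * ∏ i, (s i : ℝ) ^ ((1 / p b i).toReal - (1 / p α i).toReal) ≤ ν b := by
  classical
  have q0 : (0:ℝ) < q := lt_of_lt_of_le one_pos hq1
  have hiq0 : 0 < 1/q := by positivity
  -- characterization of the condition in hs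
  have hcrit : ∀ (x : A) (i : Fin d),
      (ENNReal.ofReal q < p x i ↔ (1 / p x i).toReal < 1/q) := by
    intro x i
    by_cases hx : p x i = ∞
    · simp only [hx, one_div, ENNReal.inv_top, ENNReal.toReal_zero]
      constructor
      · intro _; positivity
      · intro _; exact ENNReal.ofReal_lt_top
    · rw [ENNReal.ofReal_lt_iff_lt_toReal q0.le hx]
      have hpt : 0 < (p x i).toReal :=
        ENNReal.toReal_pos (lt_of_lt_of_le zero_lt_one (hp x i)).ne' hx
      rw [one_div, one_div, ENNReal.toReal_inv]
      exact ⟨fun h => by rw [inv_lt_inv₀ hpt q0]; exact h,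
        fun h => by rwa [inv_lt_inv₀ hpt q0] at h⟩
  have hs1 : ∀ i, 1 ≤ s i := by
    intro i; rw [hs i]; split
    · exact hk i
    · exact le_rfl
  have hsk : ∀ i, s i ≤ k i := by
    intro i; rw [hs i]; split
    · exact le_rfl
    · exact hk i
  have hspos : ∀ i, (0:ℝ) < (s i : ℝ) := by
    intro i; exact_mod_cast Nat.lt_of_lt_of_le Nat.zero_lt_one (hs1 i)
  have hsite : ∀ i, (s i : ℝ) = if (1 / p α i).toReal < 1/q then (k i : ℝ) else 1 := by
    intro i; rw [hs i]
    by_cases hc : (1 / p α i).toReal < 1/q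
    · rw [if_pos hc, if_pos ((hcrit α i).mpr hc)]
    · rw [if_neg hc, if_neg (fun hlt => hc ((hcrit α i).mp hlt))]; simp
  -- the critical exponent is never hit at α
  have hane : ∀ i, (1 / p α i).toReal ≠ 1/q := by
    intro i
    have hw : IsNWitness q p (fun _ : Fin 1 => α) ∅ (fun _ => 1) := by
      refine ⟨by simp, fun _ => one_pos, by simp, by simp, ?_⟩
      exact affineIndependent_of_subsingleton ℝ _
    have := hgen.2 1 le_rfl (by omega) _ _ _ hw i (Finset.notMem_empty i)
    simpa [thetaRecip] using this
  -- the defining set of Psi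
  set S : Set ℝ := { r : ℝ | ∃ m, 1 ≤ m ∧ m ≤ d + 1 ∧ ∃ (α : Fin m → A) (I : Finset (Fin d))
    (lam : Fin m → ℝ), IsNWitness q p α I lam ∧
      r = (∏ j, ν (α j) ^ lam j) * Phi (theta p α lam) k q } with hSdef
  have hbdd : BddBelow S := by
    refine ⟨0, fun r hr => ?_⟩
    obtain ⟨m, _, _, α', I, lam, hw, rfl⟩ := hr
    apply mul_nonneg
    · exact Finset.prod_nonneg fun j _ => Real.rpow_nonneg (hν _).le _
    · exact Finset.prod_nonneg fun j _ => Real.rpow_nonneg (Nat.cast_nonneg _) _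
  have hPsiS : ∀ r ∈ S, Psi p ν k q ≤ r := fun r hr => csInf_le hbdd hr
  -- m = 1 membership
  have hm1 : ∀ b : A, (ν b * Phi (p b) k q) ∈ S := by
    intro b
    refine ⟨1, le_rfl, by omega, fun _ => b, ∅, fun _ => 1,
      ⟨by simp, fun _ => one_pos, by simp, by simp, affineIndependent_of_subsingleton ℝ _⟩, ?_⟩
    rw [Fin.prod_univ_one, Real.rpow_one]
    congr 1
    apply Finset.prod_congr rfl
    intro i _
    congr 2
    rw [one_div_theta_toReal _ _ _ _ (thetaRecip_nonneg _ _ _ _ fun _ => zero_le_one)]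
    simp [thetaRecip]
  -- Psi in product form
  have hPsiProd : Psi p ν k q = ν α * ∏ i, (s i : ℝ) ^ (1/q - (1 / p α i).toReal) := by
    rw [hmin]
    congr 1
    apply Finset.prod_congr rfl
    intro i _
    rw [hsite i]
    by_cases hia : (1 / p α i).toReal < 1/q
    · rw [if_pos hia, max_eq_left (by linarith)]
    · have hgt : 1/q < (1 / p α i).toReal := lt_of_le_of_ne (not_lt.mp hia) (hane i).symm
      rw [if_neg hia, max_eq_right (by linarith), Real.rpow_zero, Real.one_rpow]
  -- Part 2
  have part2 : ∀ b : A,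
      ν α * ∏ i, (s i : ℝ) ^ ((1 / p b i).toReal - (1 / p α i).toReal) ≤ ν b := by
    intro b
    by_cases hbα : b = α
    · subst hbα
      simp only [sub_self, Real.rpow_zero, Finset.prod_const_one, mul_one, le_refl]
    · -- main case: b ≠ α
      set c : Fin d → ℝ := fun i =>
        if ((1 / p α i).toReal < 1/q ∧ 1/q ≤ (1 / p b i).toReal) ∨
           ((1 / p b i).toReal ≤ 1/q ∧ 1/q < (1 / p α i).toReal)
        then (1/q - (1 / p α i).toReal) / ((1 / p b i).toReal - (1 / p α i).toReal)
        else 1 with hcdef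
      have hune : (Finset.univ : Finset (Fin d)).Nonempty := ⟨⟨0, hd⟩, Finset.mem_univ _⟩
      set t := Finset.univ.inf' hune c with htdef
      have hc01 : ∀ i, 0 < c i ∧ c i ≤ 1 := by
        intro i
        rw [hcdef]
        dsimp only
        by_cases hcond : ((1 / p α i).toReal < 1/q ∧ 1/q ≤ (1 / p b i).toReal) ∨
           ((1 / p b i).toReal ≤ 1/q ∧ 1/q < (1 / p α i).toReal)
        · rw [if_pos hcond]
          rcases hcond with ⟨h1, h2⟩ | ⟨h1, h2⟩
          · have hden : 0 < (1 / p b i).toReal - (1 / p α i).toReal := by linarith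
            exact ⟨div_pos (by linarith) hden, by rw [div_le_one hden]; linarith⟩
          · have heq : (1/q - (1 / p α i).toReal) / ((1 / p b i).toReal - (1 / p α i).toReal)
                = ((1 / p α i).toReal - 1/q) / ((1 / p α i).toReal - (1 / p b i).toReal) := by
              rw [← neg_div_neg_eq]; ring_nf
            have hden : 0 < (1 / p α i).toReal - (1 / p b i).toReal := by linarith
            rw [heq]
            exact ⟨div_pos (by linarith) hden, by rw [div_le_one hden]; linarith⟩
        · rw [if_neg hcond]; exact ⟨one_pos, le_rfl⟩
      have ht0 : 0 < t := (Finset.lt_inf'_iff hune).mpr fun i _ => (hc01 i).1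
      have ht1 : t ≤ 1 := le_trans (Finset.inf'_le c (Finset.mem_univ ⟨0, hd⟩)) (hc01 _).2
      have htle : ∀ i, t ≤ c i := fun i => Finset.inf'_le c (Finset.mem_univ i)
      have hF3 : ∀ i, (1 / p α i).toReal < 1/q →
          (1-t) * (1 / p α i).toReal + t * (1 / p b i).toReal ≤ 1/q := by
        intro i hi
        by_cases hb2 : (1 / p b i).toReal ≤ 1/q
        · have h1 : (1-t) * (1 / p α i).toReal ≤ (1-t) * (1/q) :=
            mul_le_mul_of_nonneg_left hi.le (by linarith)
          have h2 : t * (1 / p b i).toReal ≤ t * (1/q) :=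
            mul_le_mul_of_nonneg_left hb2 ht0.le
          nlinarith
        · push_neg at hb2
          have hcond : ((1 / p α i).toReal < 1/q ∧ 1/q ≤ (1 / p b i).toReal) ∨
              ((1 / p b i).toReal ≤ 1/q ∧ 1/q < (1 / p α i).toReal) := Or.inl ⟨hi, hb2.le⟩
          have htc := htle i
          rw [hcdef] at htc; dsimp only at htc; rw [if_pos hcond] at htc
          have hden : 0 < (1 / p b i).toReal - (1 / p α i).toReal := by linarith
          rw [le_div_iff₀ hden] at htc
          nlinarith
      have hF4 : ∀ i, 1/q < (1 / p α i).toReal →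
          1/q ≤ (1-t) * (1 / p α i).toReal + t * (1 / p b i).toReal := by
        intro i hi
        by_cases hb2 : 1/q ≤ (1 / p b i).toReal
        · have h1 : (1-t) * (1/q) ≤ (1-t) * (1 / p α i).toReal :=
            mul_le_mul_of_nonneg_left hi.le (by linarith)
          have h2 : t * (1/q) ≤ t * (1 / p b i).toReal :=
            mul_le_mul_of_nonneg_left hb2 ht0.le
          nlinarith
        · push_neg at hb2
          have hcond : ((1 / p α i).toReal < 1/q ∧ 1/q ≤ (1 / p b i).toReal) ∨
              ((1 / p b i).toReal ≤ 1/q ∧ 1/q < (1 / p α i).toReal) := Or.inr ⟨hb2.le, hi⟩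
          have htc := htle i
          rw [hcdef] at htc; dsimp only at htc; rw [if_pos hcond] at htc
          have heq : (1/q - (1 / p α i).toReal) / ((1 / p b i).toReal - (1 / p α i).toReal)
              = ((1 / p α i).toReal - 1/q) / ((1 / p α i).toReal - (1 / p b i).toReal) := by
            rw [← neg_div_neg_eq]; ring_nf
          rw [heq] at htc
          have hden : 0 < (1 / p α i).toReal - (1 / p b i).toReal := by linarith
          rw [le_div_iff₀ hden] at htc
          nlinarith
      have hcross : t < 1 → ∃ i0 : Fin d,
          (1-t) * (1 / p α i0).toReal + t * (1 / p b i0).toReal = 1/q := by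
        intro ht
        obtain ⟨i0, -, hi0⟩ := Finset.exists_mem_eq_inf' hune c
        refine ⟨i0, ?_⟩
        have hcond : ((1 / p α i0).toReal < 1/q ∧ 1/q ≤ (1 / p b i0).toReal) ∨
            ((1 / p b i0).toReal ≤ 1/q ∧ 1/q < (1 / p α i0).toReal) := by
          by_contra hcon
          have hone : c i0 = 1 := by rw [hcdef]; dsimp only; rw [if_neg hcon]
          rw [← htdef, hone] at hi0
          exact absurd hi0 ht.ne
        have hden : (1 / p b i0).toReal - (1 / p α i0).toReal ≠ 0 := by
          rcases hcond with ⟨h1, h2⟩ | ⟨h1, h2⟩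
          · have : 0 < (1 / p b i0).toReal - (1 / p α i0).toReal := by linarith
            linarith
          · have : (1 / p b i0).toReal - (1 / p α i0).toReal < 0 := by linarith
            linarith
        have htval : t = (1/q - (1 / p α i0).toReal) /
            ((1 / p b i0).toReal - (1 / p α i0).toReal) := by
          rw [htdef, hi0, hcdef]; dsimp only; rw [if_pos hcond]
        rw [htval]
        set aa := (1 / p α i0).toReal with haa
        set bbv := (1 / p b i0).toReal with hbbv
        field_simp
        ring
      have hmem : ν α ^ (1-t) * ν b ^ t *
          ∏ i, (k i : ℝ) ^ max (1/q - ((1-t) * (1 / p α i).toReal + t * (1 / p b i).toReal)) 0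
          ∈ S := by
        rcases lt_or_eq_of_le ht1 with ht | ht
        · obtain ⟨i0, hi0⟩ := hcross ht
          refine ⟨2, by omega, by omega, ![α, b], {i0}, ![1-t, t], ⟨?_, ?_, ?_, ?_, ?_⟩, ?_⟩
          · simp
          · intro j; fin_cases j
            · simpa using (by linarith : (0:ℝ) < 1 - t)
            · simpa using ht0
          · rw [Fin.sum_univ_two]
            simp only [Matrix.cons_val_zero, Matrix.cons_val_one, Matrix.head_cons]
            ring
          · intro i hi
            rw [Finset.mem_singleton] at hi
            subst hi
            simp only [thetaRecip, Fin.sum_univ_two, Matrix.cons_val_zero,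
              Matrix.cons_val_one, Matrix.head_cons]
            exact hi0
          · apply hgen.1 2 le_rfl (by omega)
            · intro x y hxy
              fin_cases x <;> fin_cases y <;> simp_all
            · simp
          · rw [Fin.prod_univ_two]
            simp only [Matrix.cons_val_zero, Matrix.cons_val_one, Matrix.head_cons]
            congr 1
            apply Finset.prod_congr rfl
            intro i _
            congr 2
            rw [one_div_theta_toReal _ _ _ _ (thetaRecip_nonneg _ _ _ _ ?_)]
            · simp only [thetaRecip, Fin.sum_univ_two, Matrix.cons_val_zero,
                Matrix.cons_val_one, Matrix.head_cons]
            · intro j; fin_cases j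
              · simpa using (by linarith : (0:ℝ) ≤ 1 - t)
              · simpa using ht0.le
        · rw [ht]
          simp only [sub_self, Real.rpow_zero, one_mul, Real.rpow_one, zero_mul, zero_add]
          exact hm1 b
      have hkey : ν α * ∏ i, (s i : ℝ) ^ (1/q - (1 / p α i).toReal)
          ≤ ν α ^ (1-t) * ν b ^ t *
            ∏ i, (s i : ℝ) ^ (1/q - ((1-t) * (1 / p α i).toReal + t * (1 / p b i).toReal)) := by
        have hgt := hPsiS _ hmem
        rw [hPsiProd] at hgt
        refine le_trans hgt (le_of_eq ?_)
        congr 1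
        apply Finset.prod_congr rfl
        intro i _
        rw [hsite i]
        by_cases hia : (1 / p α i).toReal < 1/q
        · rw [if_pos hia, max_eq_left (by linarith [hF3 i hia])]
        · have hgt2 : 1/q < (1 / p α i).toReal := lt_of_le_of_ne (not_lt.mp hia) (hane i).symm
          rw [if_neg hia, max_eq_right (by linarith [hF4 i hgt2]), Real.rpow_zero,
            Real.one_rpow]
      set Pab := ∏ i, (s i : ℝ) ^ ((1 / p α i).toReal - (1 / p b i).toReal) with hPabdef
      set Pba := ∏ i, (s i : ℝ) ^ ((1 / p b i).toReal - (1 / p α i).toReal) with hPbadef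
      have hPabpos : 0 < Pab :=
        Finset.prod_pos fun i _ => Real.rpow_pos_of_pos (hspos i) _
      have hPbapos : 0 < Pba :=
        Finset.prod_pos fun i _ => Real.rpow_pos_of_pos (hspos i) _
      have hP0pos : 0 < ∏ i, (s i : ℝ) ^ (1/q - (1 / p α i).toReal) :=
        Finset.prod_pos fun i _ => Real.rpow_pos_of_pos (hspos i) _
      have hsplit : ∏ i, (s i : ℝ) ^ (1/q - ((1-t) * (1 / p α i).toReal
            + t * (1 / p b i).toReal))
          = (∏ i, (s i : ℝ) ^ (1/q - (1 / p α i).toReal)) * Pab ^ t := by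
        rw [hPabdef, ← Real.finset_prod_rpow _ _
          (fun i _ => Real.rpow_nonneg (hspos i).le _) t, ← Finset.prod_mul_distrib]
        apply Finset.prod_congr rfl
        intro i _
        rw [← Real.rpow_mul (hspos i).le, ← Real.rpow_add (hspos i)]
        congr 1
        ring
      have hkey2 : ν α ≤ ν α ^ (1-t) * ν b ^ t * Pab ^ t := by
        rw [hsplit] at hkey
        have hrw : ν α ^ (1-t) * ν b ^ t *
            ((∏ i, (s i : ℝ) ^ (1/q - (1 / p α i).toReal)) * Pab ^ t)
            = (ν α ^ (1-t) * ν b ^ t * Pab ^ t) *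
              (∏ i, (s i : ℝ) ^ (1/q - (1 / p α i).toReal)) := by ring
        rw [hrw] at hkey
        exact (mul_le_mul_iff_of_pos_right hP0pos).mp hkey
      have hE : 1 ≤ (ν b * Pab) / ν α := by
        by_contra hcon
        push_neg at hcon
        have hEpos : 0 ≤ (ν b * Pab) / ν α :=
          le_of_lt (div_pos (mul_pos (hν b) hPabpos) (hν α))
        have hlt : ((ν b * Pab) / ν α) ^ t < 1 := Real.rpow_lt_one hEpos hcon ht0
        have heq : ν α ^ (1-t) * ν b ^ t * Pab ^ t = ν α * ((ν b * Pab) / ν α) ^ t := by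
          rw [Real.div_rpow (mul_nonneg (hν b).le hPabpos.le) (hν α).le,
            Real.mul_rpow (hν b).le hPabpos.le, Real.rpow_sub (hν α), Real.rpow_one]
          field_simp
        rw [heq] at hkey2
        nlinarith [hν α]
      have hαb : ν α ≤ ν b * Pab := (one_le_div (hν α)).mp hE
      have hPP : Pab * Pba = 1 := by
        rw [hPabdef, hPbadef, ← Finset.prod_mul_distrib]
        apply Finset.prod_eq_one
        intro i _
        rw [← Real.rpow_add (hspos i), show ((1 / p α i).toReal - (1 / p b i).toReal)
          + ((1 / p b i).toReal - (1 / p α i).toReal) = 0 by ring]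
        exact Real.rpow_zero _
      calc ν α * Pba ≤ (ν b * Pab) * Pba := mul_le_mul_of_nonneg_right hαb hPbapos.le
        _ = ν b * (Pab * Pba) := by ring
        _ = ν b := by rw [hPP, mul_one]

  refine ⟨?_, part2⟩
  -- Part 1
  show ∀ b, mixedNorm d k (p b) _ ≤ ν b
  intro b
  rw [mixedNorm_smul d k (p b) (hp b), mixedNorm_box d k (p b) s (hp b) hs1 hsk,
    abs_of_nonneg (mul_nonneg (hν α).le
      (Finset.prod_nonneg fun i _ => Real.rpow_nonneg (Nat.cast_nonneg _) _))]
  calc (ν α * ∏ i, (s i : ℝ) ^ (-(1 / p α i).toReal)) * ∏ i, (s i : ℝ) ^ (1 / p b i).toReal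
      = ν α * ∏ i, (s i : ℝ) ^ ((1 / p b i).toReal - (1 / p α i).toReal) := by
        rw [mul_assoc, ← Finset.prod_mul_distrib]
        congr 1
        apply Finset.prod_congr rfl
        intro i _
        rw [← Real.rpow_add (hspos i)]
        ring_nf
    _ ≤ ν b := part2 b
end

section
/- Let d ∈ ℕ, k̄ = (k_1,…,k_d) ∈ ℕ^d, 1 ≤ q ≤ 2, and let A be a nonempty finite index set with ν_β > 0 and p̄_β ∈ [1,∞]^d for β ∈ A. Fix α ∈ A, and let p̄_α^N ∈ [1,∞]^d be a sequence with 1/p̄_α^N → 1/p̄_α coordinatewise as N → ∞; set p̄_β^N = p̄_β for β ≠ α. Then Ψ({p̄_β^N}_{β∈A}, k̄, q) → Ψ({p̄_β}_{β∈A}, k̄, q) as N → ∞. -/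
open scoped ENNReal BigOperators
open Filter

open Finset

noncomputable def aCoef {d : ℕ} {A : Type*} (p : A → Fin d → ℝ≥0∞) (β : A) (i : Fin d) : ℝ :=
  (1 / p β i).toReal

noncomputable def Hfun {d : ℕ} {A : Type*} [Fintype A] (p : A → Fin d → ℝ≥0∞)
    (ν : A → ℝ) (k : Fin d → ℕ) (q : ℝ) (lam : A → ℝ) : ℝ :=
  ∑ β, lam β * Real.log (ν β) +
    ∑ i, Real.log (k i) * max (1 / q - ∑ β, lam β * aCoef p β i) 0

lemma value_eq_exp {d m : ℕ} {A : Type*} (p : A → Fin d → ℝ≥0∞) (ν : A → ℝ)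
    (k : Fin d → ℕ) (q : ℝ) (hν : ∀ a, 0 < ν a) (hk : ∀ i, 1 ≤ k i)
    (α : Fin m → A) (lam : Fin m → ℝ) (hlam : ∀ j, 0 ≤ lam j) :
    (∏ j, ν (α j) ^ lam j) * Phi (theta p α lam) k q
      = Real.exp ((∑ j, lam j * Real.log (ν (α j)))
          + ∑ i, Real.log (k i) * max (1 / q - thetaRecip p α lam i) 0) := by
  have h1 : ∀ i, (1 / theta p α lam i).toReal = thetaRecip p α lam i := by
    intro i
    rw [theta, one_div, inv_inv, ENNReal.toReal_ofReal]
    exact Finset.sum_nonneg fun j _ => mul_nonneg (hlam j) ENNReal.toReal_nonneg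
  rw [Real.exp_add, Real.exp_sum, Real.exp_sum]
  congr 1
  · exact Finset.prod_congr rfl fun j _ => by
      rw [Real.rpow_def_of_pos (hν (α j)), mul_comm]
  · rw [Phi]
    exact Finset.prod_congr rfl fun i _ => by
      rw [h1 i, Real.rpow_def_of_pos (by exact_mod_cast Nat.lt_of_lt_of_le Nat.zero_lt_one (hk i))]

lemma fiber_sum {m : ℕ} {A : Type*} [Fintype A] [DecidableEq A] (α : Fin m → A)
    (lam : Fin m → ℝ) (F : A → ℝ) :
    ∑ β, (∑ j ∈ univ.filter (fun j => α j = β), lam j) * F β = ∑ j, lam j * F (α j) := by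
  rw [← Finset.sum_fiberwise (univ : Finset (Fin m)) α (fun j => lam j * F (α j))]
  refine Finset.sum_congr rfl fun β _ => ?_
  rw [Finset.sum_mul]
  exact Finset.sum_congr rfl fun j hj => by
    rw [(Finset.mem_filter.mp hj).2]

lemma witness_value {d m : ℕ} {A : Type*} [Fintype A] (p : A → Fin d → ℝ≥0∞) (ν : A → ℝ)
    (k : Fin d → ℕ) (q : ℝ) (hν : ∀ a, 0 < ν a) (hk : ∀ i, 1 ≤ k i)
    (α : Fin m → A) (I : Finset (Fin d)) (lam : Fin m → ℝ) (hw : IsNWitness q p α I lam) :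
    ∃ lam' ∈ stdSimplex ℝ A,
      (∏ j, ν (α j) ^ lam j) * Phi (theta p α lam) k q = Real.exp (Hfun p ν k q lam') := by
  classical
  obtain ⟨-, hpos, hsum, -, -⟩ := hw
  set lam' : A → ℝ := fun β => ∑ j ∈ univ.filter (fun j => α j = β), lam j with hlam'
  refine ⟨lam', ⟨fun β => Finset.sum_nonneg fun j _ => (hpos j).le, ?_⟩, ?_⟩
  · rw [hlam']
    simpa using (Finset.sum_fiberwise (univ : Finset (Fin m)) α lam).trans hsum
  · rw [value_eq_exp p ν k q hν hk α lam (fun j => (hpos j).le), Hfun]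
    congr 1
    rw [fiber_sum α lam (fun β => Real.log (ν β))]
    congr 1
    refine Finset.sum_congr rfl fun i _ => ?_
    rw [fiber_sum α lam (fun β => aCoef p β i)]
    rfl

lemma sel_lemma {d : ℕ} : ∀ (n : ℕ) {B : Type*} [DecidableEq B] (E : Finset B),
    E.card = n → ∀ (S : Finset (Fin d)) (u : B → Fin d → ℝ),
    (∀ g : B → ℝ, (∀ i ∈ S, ∑ j ∈ E, g j * u j i = 0) → ∀ j ∈ E, g j = 0) →
    ∃ I : Finset (Fin d), I ⊆ S ∧ I.card = n ∧
      ∀ g : B → ℝ, (∀ i ∈ I, ∑ j ∈ E, g j * u j i = 0) → ∀ j ∈ E, g j = 0 := by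
  intro n
  induction n with
  | zero =>
    intro B _ E hE S u _
    refine ⟨∅, empty_subset _, rfl, ?_⟩
    intro g _ j hj
    rw [Finset.card_eq_zero.mp hE] at hj
    exact absurd hj (Finset.notMem_empty j)
  | succ n IH =>
    intro B _ E hE S u hu
    have hEne : E.Nonempty := Finset.card_pos.mp (by omega)
    obtain ⟨j0, hj0⟩ := hEne
    have hi0 : ∃ i0 ∈ S, u j0 i0 ≠ 0 := by
      by_contra h
      push_neg at h
      have := hu (fun j => if j = j0 then 1 else 0) ?_ j0 hj0
      · simp at this
      · intro i hi
        simp only [ite_mul, one_mul, zero_mul]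
        rw [Finset.sum_ite_eq' E j0 (fun j => u j i)]
        simp [hj0, h i hi]
    obtain ⟨i0, hi0S, hi0ne⟩ := hi0
    set u' : B → Fin d → ℝ := fun j i => u j i - u j i0 / u j0 i0 * u j0 i with hu'def
    have key : ∀ (g : B → ℝ) (i : Fin d),
        ∑ j ∈ E.erase j0, g j * u' j i =
          ∑ j ∈ E.erase j0, g j * u j i
            - (∑ j ∈ E.erase j0, g j * (u j i0 / u j0 i0)) * u j0 i := by
      intro g i
      rw [Finset.sum_mul, ← Finset.sum_sub_distrib]
      refine Finset.sum_congr rfl fun j _ => by simp only [hu'def]; ring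
    have herase : ∀ (g : B → ℝ) (i : Fin d), ∑ j ∈ E, g j * u j i = 0 →
        ∑ j ∈ E.erase j0, g j * u j i = - (g j0 * u j0 i) := by
      intro g i hgi
      have := Finset.sum_erase_add E (fun j => g j * u j i) hj0
      linarith
    have hrec := IH (E.erase j0) (by rw [Finset.card_erase_of_mem hj0, hE]; omega) (S.erase i0) u' ?_
    · obtain ⟨I', hI'S, hI'card, hI'⟩ := hrec
      refine ⟨insert i0 I', ?_, ?_, ?_⟩
      · intro i hi
        rcases Finset.mem_insert.mp hi with rfl | hi
        · exact hi0S
        · exact (Finset.erase_subset _ _) (hI'S hi)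
      · rw [Finset.card_insert_of_notMem (fun h => (Finset.mem_erase.mp (hI'S h)).1 rfl),
          hI'card]
      · intro g hg j hj
        have hgi0 : ∑ j ∈ E, g j * u j i0 = 0 := hg i0 (Finset.mem_insert_self _ _)
        have hsum_erase_i0 := herase g i0 hgi0
        have hg' : ∀ j ∈ E.erase j0, g j = 0 := by
          apply hI' g
          intro i hiI'
          have hgi : ∑ j ∈ E, g j * u j i = 0 := hg i (Finset.mem_insert_of_mem hiI')
          rw [key g i, herase g i hgi]
          have hcoef : ∑ j ∈ E.erase j0, g j * (u j i0 / u j0 i0) = - g j0 := by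
            have h2 : ∑ j ∈ E.erase j0, g j * (u j i0 / u j0 i0)
                = (∑ j ∈ E.erase j0, g j * u j i0) / u j0 i0 := by
              rw [Finset.sum_div]
              exact Finset.sum_congr rfl fun j _ => by ring
            rw [h2, hsum_erase_i0]
            field_simp
          rw [hcoef]; ring
        rcases eq_or_ne j j0 with hjj | hne
        · rw [hjj]
          have hz : ∑ j ∈ E.erase j0, g j * u j i0 = 0 :=
            Finset.sum_eq_zero fun j hjE => by rw [hg' j hjE, zero_mul]
          rw [hz] at hsum_erase_i0
          have hz2 : g j0 * u j0 i0 = 0 := by linarith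
          rcases mul_eq_zero.mp hz2 with h | h
          · exact h
          · exact absurd h hi0ne
        · exact hg' j (Finset.mem_erase.mpr ⟨hne, hj⟩)
    · intro g hg j hj
      set c : ℝ := ∑ j' ∈ E.erase j0, g j' * (u j' i0 / u j0 i0) with hc
      set gext : B → ℝ := fun j => if j = j0 then -c else g j with hgext
      have hgg : ∀ j ∈ E.erase j0, gext j = g j := by
        intro j hj
        simp only [hgext, if_neg (Finset.mem_erase.mp hj).1]
      have hmain : ∀ i : Fin d, ∑ j ∈ E, gext j * u j i
          = ∑ j ∈ E.erase j0, g j * u' j i := by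
        intro i
        have hsplit := Finset.sum_erase_add E (fun j => gext j * u j i) hj0
        rw [key g i, ← hsplit]
        have : ∑ j ∈ E.erase j0, gext j * u j i = ∑ j ∈ E.erase j0, g j * u j i :=
          Finset.sum_congr rfl fun j hjE => by rw [hgg j hjE]
        rw [this]
        simp only [hgext, if_pos rfl]
        ring
      have hgext0 : ∀ j ∈ E, gext j = 0 := by
        apply hu gext
        intro i hi
        rcases eq_or_ne i i0 with rfl | hne
        · rw [hmain i]
          refine Finset.sum_eq_zero fun j hjE => ?_
          have : u' j i = 0 := by
            simp only [hu'def]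
            field_simp
            ring
          rw [this, mul_zero]
        · rw [hmain i]
          exact hg i (Finset.mem_erase.mpr ⟨hne, hi⟩)
      have := hgext0 j (Finset.erase_subset _ _ hj)
      rwa [hgg j hj] at this

lemma perturb {d : ℕ} {A : Type*} [Fintype A] (p : A → Fin d → ℝ≥0∞)
    (ν : A → ℝ) (k : Fin d → ℕ) (q : ℝ) (lam μ : A → ℝ)
    (hlam : lam ∈ stdSimplex ℝ A)
    (hsupp : ∀ β, lam β = 0 → μ β = 0)
    (hsum0 : ∑ β, μ β = 0)
    (htight : ∀ i, (∑ β, lam β * aCoef p β i) = 1 / q → (∑ β, μ β * aCoef p β i) = 0)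
    (hneg : ∃ β, μ β < 0) :
    ∃ t : ℝ, 0 < t ∧ (fun β => lam β + t * μ β) ∈ stdSimplex ℝ A ∧
      Hfun p ν k q (fun β => lam β + t * μ β) = Hfun p ν k q lam
        + t * (∑ β, μ β * Real.log (ν β) + ∑ i, Real.log (k i) *
          (if (∑ β, lam β * aCoef p β i) < 1 / q then -(∑ β, μ β * aCoef p β i) else 0)) ∧
      ((∃ β, lam β ≠ 0 ∧ lam β + t * μ β = 0) ∨
       (∃ i, (∑ β, lam β * aCoef p β i) ≠ 1 / q ∧
         (∑ β, lam β * aCoef p β i) + t * (∑ β, μ β * aCoef p β i) = 1 / q)) := by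
  classical
  set s : Fin d → ℝ := fun i => ∑ β, lam β * aCoef p β i with hs
  set mm : Fin d → ℝ := fun i => ∑ β, μ β * aCoef p β i with hmm
  set C : Finset ℝ :=
    ((univ.filter fun β => μ β < 0).image fun β => lam β / (-μ β)) ∪
    ((univ.filter fun i : Fin d => mm i ≠ 0 ∧ 0 < (1 / q - s i) / mm i).image
      fun i => (1 / q - s i) / mm i) with hC
  have hlampos : ∀ β, μ β ≠ 0 → 0 < lam β := by
    intro β hβ
    rcases eq_or_lt_of_le (hlam.1 β) with h | h
    · exact absurd (hsupp β h.symm) hβ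
    · exact h
  have hCne : C.Nonempty := by
    obtain ⟨β, hβ⟩ := hneg
    exact ⟨lam β / (-μ β), Finset.mem_union_left _
      (Finset.mem_image.mpr ⟨β, Finset.mem_filter.mpr ⟨Finset.mem_univ _, hβ⟩, rfl⟩)⟩
  have hCpos : ∀ x ∈ C, 0 < x := by
    intro x hx
    rcases Finset.mem_union.mp hx with h | h
    · obtain ⟨β, hβ, rfl⟩ := Finset.mem_image.mp h
      have hβ' := (Finset.mem_filter.mp hβ).2
      exact div_pos (hlampos β hβ'.ne) (neg_pos.mpr hβ')
    · obtain ⟨i, hi, rfl⟩ := Finset.mem_image.mp h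
      exact (Finset.mem_filter.mp hi).2.2
  set t := C.min' hCne with htdef
  have ht : 0 < t := hCpos t (Finset.min'_mem C hCne)
  have key1 : ∀ i, s i < 1 / q → t * mm i ≤ 1 / q - s i := by
    intro i hi
    rcases le_or_gt (mm i) 0 with h | h
    · nlinarith
    · have hmem : (1 / q - s i) / mm i ∈ C := Finset.mem_union_right _
        (Finset.mem_image.mpr ⟨i, Finset.mem_filter.mpr
          ⟨Finset.mem_univ _, h.ne', div_pos (by linarith) h⟩, rfl⟩)
      have := Finset.min'_le C _ hmem
      rw [le_div_iff₀ h] at this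
      linarith
  have key2 : ∀ i, 1 / q < s i → 1 / q - s i ≤ t * mm i := by
    intro i hi
    rcases le_or_gt 0 (mm i) with h | h
    · nlinarith
    · have hmem : (1 / q - s i) / mm i ∈ C := Finset.mem_union_right _
        (Finset.mem_image.mpr ⟨i, Finset.mem_filter.mpr
          ⟨Finset.mem_univ _, h.ne, div_pos_of_neg_of_neg (by linarith) h⟩, rfl⟩)
      have := Finset.min'_le C _ hmem
      rw [le_div_iff_of_neg h] at this
      linarith
  have hsplit : ∀ F : A → ℝ,
      ∑ β, (lam β + t * μ β) * F β = ∑ β, lam β * F β + t * ∑ β, μ β * F β := by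
    intro F
    rw [Finset.mul_sum, ← Finset.sum_add_distrib]
    exact Finset.sum_congr rfl fun β _ => by ring
  have hmemΔ : (fun β => lam β + t * μ β) ∈ stdSimplex ℝ A := by
    refine ⟨fun β => ?_, ?_⟩
    · show 0 ≤ lam β + t * μ β
      rcases le_or_gt 0 (μ β) with h | h
      · exact add_nonneg (hlam.1 β) (mul_nonneg ht.le h)
      · have hmem : lam β / (-μ β) ∈ C := Finset.mem_union_left _
          (Finset.mem_image.mpr ⟨β, Finset.mem_filter.mpr ⟨Finset.mem_univ _, h⟩, rfl⟩)
        have := Finset.min'_le C _ hmem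
        rw [le_div_iff₀ (neg_pos.mpr h)] at this
        nlinarith
    · show (∑ β, (lam β + t * μ β)) = 1
      rw [Finset.sum_add_distrib, hlam.2, ← Finset.mul_sum, hsum0]
      ring
  have hmax : ∀ i, max (1 / q - (s i + t * mm i)) 0
      = max (1 / q - s i) 0 + t * (if s i < 1 / q then -(mm i) else 0) := by
    intro i
    rcases lt_trichotomy (s i) (1 / q) with h | h | h
    · rw [if_pos h, max_eq_left (by linarith [key1 i h]),
        max_eq_left (by linarith)]
      ring
    · have hmm0 : mm i = 0 := htight i h
      rw [if_neg (by rw [h]; exact lt_irrefl _), hmm0]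
      rw [h]
      simp
    · rw [if_neg (not_lt.mpr h.le), max_eq_right (by linarith [key2 i h]),
        max_eq_right (by linarith)]
      ring
  refine ⟨t, ht, hmemΔ, ?_, ?_⟩
  · rw [Hfun, Hfun, hsplit (fun β => Real.log (ν β))]
    have : ∀ i : Fin d, (∑ β, (lam β + t * μ β) * aCoef p β i) = s i + t * mm i :=
      fun i => hsplit (fun β => aCoef p β i)
    calc ∑ β, lam β * Real.log (ν β) + t * ∑ β, μ β * Real.log (ν β) +
          ∑ i, Real.log (k i) * max (1 / q - ∑ β, (lam β + t * μ β) * aCoef p β i) 0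
        = ∑ β, lam β * Real.log (ν β) + t * ∑ β, μ β * Real.log (ν β) +
          ∑ i, (Real.log (k i) * max (1 / q - s i) 0
            + t * (Real.log (k i) * (if s i < 1 / q then -(mm i) else 0))) := by
          congr 1
          refine Finset.sum_congr rfl fun i _ => ?_
          rw [this i, hmax i]
          ring
      _ = _ := by
          rw [Finset.sum_add_distrib, ← Finset.mul_sum]
          ring
  · have hmem := Finset.min'_mem C hCne
    rcases Finset.mem_union.mp hmem with h | h
    · obtain ⟨β, hβ, heq⟩ := Finset.mem_image.mp h
      have hβ' := (Finset.mem_filter.mp hβ).2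
      rw [← htdef] at heq
      left
      refine ⟨β, (hlampos β hβ'.ne).ne', ?_⟩
      have : t * (-μ β) = lam β := by
        rw [← heq, div_mul_cancel₀ _ (neg_pos.mpr hβ').ne']
      linarith
    · obtain ⟨i, hi, heq⟩ := Finset.mem_image.mp h
      obtain ⟨-, hmmne, hdivpos⟩ := Finset.mem_filter.mp hi
      rw [← htdef] at heq
      right
      refine ⟨i, ?_, ?_⟩
      · intro hcontra
        have hsi : s i = 1 / q := hcontra
        rw [hsi] at hdivpos
        simp at hdivpos
      · show s i + t * mm i = 1 / q
        have : t * mm i = 1 / q - s i := by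
          rw [← heq, div_mul_cancel₀ _ hmmne]
        linarith

lemma exists_witness {d : ℕ} {A : Type*} [Fintype A] (p : A → Fin d → ℝ≥0∞)
    (ν : A → ℝ) (k : Fin d → ℕ) (q : ℝ) (hν : ∀ a, 0 < ν a) (hk : ∀ i, 1 ≤ k i)
    (n : ℕ) :
    ∀ lam : A → ℝ, lam ∈ stdSimplex ℝ A →
      IsMinOn (Hfun p ν k q) (stdSimplex ℝ A) lam →
      (univ.filter fun β => lam β ≠ 0).card
        + (univ.filter fun i : Fin d => (∑ β, lam β * aCoef p β i) ≠ 1 / q).card ≤ n →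
      ∃ m : ℕ, 1 ≤ m ∧ m ≤ d + 1 ∧ ∃ (α : Fin m → A) (I : Finset (Fin d)) (lamw : Fin m → ℝ),
        IsNWitness q p α I lamw ∧
        (∏ j, ν (α j) ^ lamw j) * Phi (theta p α lamw) k q = Real.exp (Hfun p ν k q lam) := by
  classical
  induction n using Nat.strong_induction_on with
  | _ n IH =>
  intro lam hmemΔ hmin hcard
  set J : Finset A := univ.filter fun β => lam β ≠ 0 with hJ
  set T : Finset (Fin d) := univ.filter fun i : Fin d => (∑ β, lam β * aCoef p β i) = 1 / q
    with hT
  have hJne : J.Nonempty := by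
    obtain ⟨β, -, hβ⟩ := Finset.exists_ne_zero_of_sum_ne_zero
      (s := (univ : Finset A)) (f := lam) (by rw [hmemΔ.2]; exact one_ne_zero)
    exact ⟨β, Finset.mem_filter.mpr ⟨Finset.mem_univ _, hβ⟩⟩
  by_cases hQ : ∀ W : A → ℝ, (∀ β, β ∉ J → W β = 0) → ∑ β, W β = 0 →
      (∀ i ∈ T, ∑ β, W β * aCoef p β i = 0) → ∀ β, W β = 0
  · -- independent case: build a witness directly
    obtain ⟨β0, hβ0⟩ := hJne
    set E : Finset A := J.erase β0 with hE
    set u : A → Fin d → ℝ := fun β i => aCoef p β i - aCoef p β0 i with hu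
    have hselhyp : ∀ g : A → ℝ, (∀ i ∈ T, ∑ j ∈ E, g j * u j i = 0) → ∀ j ∈ E, g j = 0 := by
      intro g hg
      set W : A → ℝ := fun β => if β ∈ E then g β else if β = β0 then -∑ j ∈ E, g j else 0
        with hW
      have hβ0E : β0 ∉ E := Finset.notMem_erase _ _
      have hWsupp : ∀ β, β ∉ J → W β = 0 := by
        intro β hβ
        have h1 : β ∉ E := fun h => hβ (Finset.erase_subset _ _ h)
        have h2 : β ≠ β0 := fun h => hβ (h ▸ hβ0)
        simp [hW, h1, h2]
      have hWuniv : ∀ G : A → ℝ, ∑ β, W β * G β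
          = -(∑ j ∈ E, g j) * G β0 + ∑ j ∈ E, g j * G j := by
        intro G
        rw [← Finset.sum_subset (Finset.subset_univ (insert β0 E))
          (fun β _ hβ => by
            rw [hWsupp β ?_, zero_mul]
            intro hβJ
            rcases eq_or_ne β β0 with rfl | hne
            · exact hβ (Finset.mem_insert_self _ _)
            · exact hβ (Finset.mem_insert_of_mem (Finset.mem_erase.mpr ⟨hne, hβJ⟩)))]
        rw [Finset.sum_insert hβ0E]
        congr 1
        · simp [hW, hβ0E]
        · exact Finset.sum_congr rfl fun j hj => by simp [hW, hj]
      have hWsum : ∑ β, W β = 0 := by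
        have := hWuniv (fun _ => 1)
        simpa using this
      have hWlin : ∀ i ∈ T, ∑ β, W β * aCoef p β i = 0 := by
        intro i hi
        rw [hWuniv (fun β => aCoef p β i)]
        have hgu := hg i hi
        have : ∑ j ∈ E, g j * u j i
            = ∑ j ∈ E, g j * aCoef p j i - (∑ j ∈ E, g j) * aCoef p β0 i := by
          rw [Finset.sum_mul, ← Finset.sum_sub_distrib]
          exact Finset.sum_congr rfl fun j _ => by simp [hu]; ring
        rw [this] at hgu
        linarith
      intro j hj
      have := hQ W hWsupp hWsum hWlin j
      simpa [hW, hj] using this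
    obtain ⟨I, hIT, hIcard, hIprop⟩ := sel_lemma E.card E rfl T u hselhyp
    have hEcard : E.card = J.card - 1 := by rw [hE, Finset.card_erase_of_mem hβ0]
    set m : ℕ := J.card with hm
    have hm1 : 1 ≤ m := Finset.card_pos.mpr ⟨β0, hβ0⟩
    have hmd : m ≤ d + 1 := by
      have h1 : I.card ≤ d := by
        have := Finset.card_le_card (hIT.trans (Finset.filter_subset _ _))
        simpa using this
      omega
    set e : { x // x ∈ J } ≃ Fin m := J.equivFin with he
    set α : Fin m → A := fun jj => ((e.symm jj : { x // x ∈ J }) : A) with hα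
    set lamw : Fin m → ℝ := fun jj => lam (α jj) with hlamw
    have hαJ : ∀ jj, α jj ∈ J := fun jj => (e.symm jj).2
    have hreidx : ∀ F : A → ℝ, ∑ jj : Fin m, F (α jj) = ∑ β ∈ J, F β := by
      intro F
      rw [← Finset.sum_coe_sort J F]
      exact Equiv.sum_comp e.symm (fun y : { x // x ∈ J } => F y)
    have hJuniv : ∀ F : A → ℝ, (∀ β, lam β = 0 → F β = 0) → ∑ β ∈ J, F β = ∑ β, F β := by
      intro F hF
      refine Finset.sum_subset (Finset.subset_univ J) fun β _ hβ => ?_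
      refine hF β ?_
      by_contra h
      exact hβ (Finset.mem_filter.mpr ⟨Finset.mem_univ _, h⟩)
    have htR : ∀ i, thetaRecip p α lamw i = ∑ β, lam β * aCoef p β i := by
      intro i
      have h1 : ∑ jj : Fin m, (fun β => lam β * aCoef p β i) (α jj)
          = ∑ β ∈ J, (fun β => lam β * aCoef p β i) β := hreidx (fun β => lam β * aCoef p β i)
      have h2 : ∑ β ∈ J, lam β * aCoef p β i = ∑ β, lam β * aCoef p β i :=
        hJuniv _ (fun β h => by rw [h, zero_mul])
      exact h1.trans h2
    refine ⟨m, hm1, hmd, α, I, lamw, ⟨?_, ?_, ?_, ?_, ?_⟩, ?_⟩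
    · rw [hIcard, hEcard]
    · intro jj
      have := (Finset.mem_filter.mp (hαJ jj)).2
      exact lt_of_le_of_ne (hmemΔ.1 _) (Ne.symm this)
    · have h1 : ∑ jj : Fin m, lam (α jj) = ∑ β ∈ J, lam β := hreidx lam
      have h2 : ∑ β ∈ J, lam β = ∑ β, lam β := hJuniv lam (fun β h => h)
      exact h1.trans (h2.trans hmemΔ.2)
    · intro i hi
      rw [htR i]
      exact (Finset.mem_filter.mp (hIT hi)).2
    · rw [affineIndependent_iff]
      intro s w hw0 hwsum jj hjj
      set W : A → ℝ := fun β => if h : β ∈ J then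
          (if e ⟨β, h⟩ ∈ s then w (e ⟨β, h⟩) else 0) else 0 with hWdef
      have hWz : ∀ β, β ∉ J → W β = 0 := fun β hβ => dif_neg hβ
      have hWval : ∀ jj : Fin m, W (α jj) = if jj ∈ s then w jj else 0 := by
        intro jj
        have h0 : (⟨α jj, hαJ jj⟩ : { x // x ∈ J }) = e.symm jj := Subtype.ext rfl
        have h1 : W (α jj) = if e ⟨α jj, hαJ jj⟩ ∈ s then w (e ⟨α jj, hαJ jj⟩) else 0 :=
          dif_pos (hαJ jj)
        rw [h1, h0, Equiv.apply_symm_apply]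
      have hWsum : ∀ G : A → ℝ, ∑ β, W β * G β = ∑ jj ∈ s, w jj * G (α jj) := by
        intro G
        have h1 : ∑ β, W β * G β = ∑ β ∈ J, W β * G β :=
          (Finset.sum_subset (Finset.subset_univ J)
            (fun β _ hβ => by rw [hWz β hβ, zero_mul])).symm
        have h2 : ∑ jj : Fin m, (fun β => W β * G β) (α jj)
            = ∑ β ∈ J, (fun β => W β * G β) β := hreidx (fun β => W β * G β)
        have h3 : ∑ jj : Fin m, W (α jj) * G (α jj)
            = ∑ jj : Fin m, if jj ∈ s then w jj * G (α jj) else 0 := by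
          refine Finset.sum_congr rfl fun jj2 _ => ?_
          rw [hWval jj2]
          split <;> simp
        have h4 : (∑ jj : Fin m, if jj ∈ s then w jj * G (α jj) else 0)
            = ∑ jj ∈ s, w jj * G (α jj) := by
          rw [Finset.sum_ite_mem]
          congr 1
          exact Finset.univ_inter s
        rw [h1, ← h2]
        exact h3.trans h4
      have hWtot : ∑ β, W β = 0 := by
        have h5 := hWsum (fun _ => 1)
        simp only [mul_one] at h5
        rw [h5]
        exact hw0
      have hWlinI : ∀ i ∈ I, ∑ β, W β * aCoef p β i = 0 := by
        intro i hi
        rw [hWsum (fun β => aCoef p β i)]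
        have h6 := congrFun hwsum ⟨i, hi⟩
        simpa [Finset.sum_apply, aCoef] using h6
      have hJW0 : ∑ j ∈ J, W j = 0 := by
        rw [hJuniv _ (fun β h => hWz β
          (fun hβJ => ((Finset.mem_filter.mp hβJ).2 h).elim))]
        exact hWtot
      have hWE : ∀ j ∈ E, W j = 0 := by
        apply hIprop W
        intro i hi
        have h1 : ∑ j ∈ E, W j * u j i
            = ∑ j ∈ E, W j * aCoef p j i - (∑ j ∈ E, W j) * aCoef p β0 i := by
          rw [Finset.sum_mul, ← Finset.sum_sub_distrib]
          exact Finset.sum_congr rfl fun j _ => by simp [hu]; ring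
        have h2 : ∑ j ∈ E, W j * aCoef p j i = -(W β0 * aCoef p β0 i) := by
          have hsplit := Finset.sum_erase_add J (fun j => W j * aCoef p j i) hβ0
          have hJW : ∑ j ∈ J, W j * aCoef p j i = 0 := by
            rw [hJuniv _ (fun β h => by
              rw [hWz β (fun hβJ => ((Finset.mem_filter.mp hβJ).2 h).elim), zero_mul])]
            exact hWlinI i hi
          rw [hJW] at hsplit
          linarith
        have h3 : ∑ j ∈ E, W j = -(W β0) := by
          have hsplit := Finset.sum_erase_add J W hβ0
          rw [hJW0] at hsplit
          rw [hE]
          linarith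
        rw [h1, h2, h3]
        ring
      have hWβ0 : W β0 = 0 := by
        have hsplit := Finset.sum_erase_add J W hβ0
        have hE0 : ∑ j ∈ J.erase β0, W j = 0 :=
          Finset.sum_eq_zero (fun j hjE => hWE j (by rw [hE]; exact hjE))
        rw [hJW0, hE0] at hsplit
        linarith
      have hWαjj : W (α jj) = 0 := by
        rcases eq_or_ne (α jj) β0 with h | h
        · rw [h]; exact hWβ0
        · exact hWE _ (Finset.mem_erase.mpr ⟨h, hαJ jj⟩)
      rw [hWval jj, if_pos hjj] at hWαjj
      exact hWαjj
    · rw [value_eq_exp p ν k q hν hk α lamw (fun jj => hmemΔ.1 _), Hfun]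
      congr 1
      congr 1
      · have h1 : ∑ jj : Fin m, (fun β => lam β * Real.log (ν β)) (α jj)
            = ∑ β ∈ J, (fun β => lam β * Real.log (ν β)) β :=
          hreidx (fun β => lam β * Real.log (ν β))
        have h2 : ∑ β ∈ J, lam β * Real.log (ν β) = ∑ β, lam β * Real.log (ν β) :=
          hJuniv _ (fun β h => by rw [h, zero_mul])
        exact h1.trans h2
      · refine Finset.sum_congr rfl fun i _ => ?_
        rw [htR i]
  · -- dependent case: perturb and recurse
    push_neg at hQ
    obtain ⟨W, hWsupp, hWsum0, hWtight, β1, hβ1⟩ := hQ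
    have hsupp' : ∀ β, lam β = 0 → W β = 0 := fun β h =>
      hWsupp β (fun hβJ => (Finset.mem_filter.mp hβJ).2 h)
    have htight' : ∀ i, (∑ β, lam β * aCoef p β i) = 1 / q → (∑ β, W β * aCoef p β i) = 0 :=
      fun i h => hWtight i (Finset.mem_filter.mpr ⟨Finset.mem_univ _, h⟩)
    have hnegW : ∃ β, W β < 0 := by
      by_contra h
      push_neg at h
      exact hβ1 ((Finset.sum_eq_zero_iff_of_nonneg (fun β _ => h β)).mp hWsum0 β1
        (Finset.mem_univ _))
    have hnegW2 : ∃ β, -W β < 0 := by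
      by_contra h
      push_neg at h
      have hz : ∑ β, -W β = 0 := by rw [Finset.sum_neg_distrib, hWsum0, neg_zero]
      have := (Finset.sum_eq_zero_iff_of_nonneg (fun β _ => h β)).mp hz β1 (Finset.mem_univ _)
      exact hβ1 (by linarith)
    obtain ⟨t, ht, hmem', heq', hevent⟩ :=
      perturb p ν k q lam W hmemΔ hsupp' hWsum0 htight' hnegW
    obtain ⟨t2, ht2, hmem2, heq2, -⟩ :=
      perturb p ν k q lam (fun β => -W β) hmemΔ
        (fun β h => by show -W β = 0; rw [hsupp' β h, neg_zero])
        (by show ∑ β, -W β = 0; rw [Finset.sum_neg_distrib, hWsum0, neg_zero])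
        (fun i h => by
          show ∑ β, -W β * aCoef p β i = 0
          rw [show (∑ β, -W β * aCoef p β i) = -(∑ β, W β * aCoef p β i) by
            rw [← Finset.sum_neg_distrib]
            exact Finset.sum_congr rfl fun β _ => by ring, htight' i h, neg_zero])
        hnegW2
    set c1 : ℝ := ∑ β, W β * Real.log (ν β) + ∑ i, Real.log (k i) *
      (if (∑ β, lam β * aCoef p β i) < 1 / q then -(∑ β, W β * aCoef p β i) else 0) with hc1
    have hc1neg : (∑ β, (fun β => -W β) β * Real.log (ν β) + ∑ i, Real.log (k i) *
        (if (∑ β, lam β * aCoef p β i) < 1 / q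
          then -(∑ β, (fun β => -W β) β * aCoef p β i) else 0))
        = -c1 := by
      show (∑ β, -W β * Real.log (ν β) + ∑ i, Real.log (k i) *
        (if (∑ β, lam β * aCoef p β i) < 1 / q
          then -(∑ β, -W β * aCoef p β i) else 0)) = -c1
      have e1 : ∑ β, -W β * Real.log (ν β) = -(∑ β, W β * Real.log (ν β)) := by
        rw [← Finset.sum_neg_distrib]; exact Finset.sum_congr rfl fun β _ => by ring
      have e3 : ∀ i : Fin d, ∑ β, -W β * aCoef p β i = -(∑ β, W β * aCoef p β i) := by
        intro i
        rw [← Finset.sum_neg_distrib]; exact Finset.sum_congr rfl fun β _ => by ring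
      have e2 : ∑ i, Real.log (k i) * (if (∑ β, lam β * aCoef p β i) < 1 / q
          then -(∑ β, -W β * aCoef p β i) else 0)
          = -(∑ i, Real.log (k i) * (if (∑ β, lam β * aCoef p β i) < 1 / q
            then -(∑ β, W β * aCoef p β i) else 0)) := by
        rw [← Finset.sum_neg_distrib]
        refine Finset.sum_congr rfl fun i _ => ?_
        rw [e3 i]
        split <;> ring
      rw [e1, e2, hc1]
      ring
    rw [hc1neg] at heq2
    have hge1 : Hfun p ν k q lam ≤ Hfun p ν k q lam + t * c1 := by
      rw [← heq']; exact hmin hmem'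
    have hge2 : Hfun p ν k q lam ≤ Hfun p ν k q lam + t2 * (-c1) := by
      rw [← heq2]; exact hmin hmem2
    have hc10 : c1 = 0 := by
      by_contra h
      rcases lt_or_gt_of_ne h with h' | h'
      · nlinarith
      · nlinarith
    rw [hc10, mul_zero, add_zero] at heq'
    set lam' : A → ℝ := fun β => lam β + t * W β with hlam'
    have hmin' : IsMinOn (Hfun p ν k q) (stdSimplex ℝ A) lam' := by
      rw [isMinOn_iff]
      intro x hx
      rw [show Hfun p ν k q lam' = Hfun p ν k q lam from heq']
      exact hmin hx
    have hsum' : ∀ i, (∑ β, lam' β * aCoef p β i)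
        = (∑ β, lam β * aCoef p β i) + t * (∑ β, W β * aCoef p β i) := by
      intro i
      rw [Finset.mul_sum, ← Finset.sum_add_distrib]
      exact Finset.sum_congr rfl fun β _ => by rw [hlam']; ring
    have hJsub : (univ.filter fun β => lam' β ≠ 0) ⊆ J := by
      refine Finset.monotone_filter_right _ ?_
      intro β _ hβ
      show lam β ≠ 0
      by_contra h
      exact hβ (by show lam β + t * W β = 0; rw [h, hsupp' β h, mul_zero, add_zero])
    have hTsub : (univ.filter fun i : Fin d => (∑ β, lam' β * aCoef p β i) ≠ 1 / q)
        ⊆ (univ.filter fun i : Fin d => (∑ β, lam β * aCoef p β i) ≠ 1 / q) := by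
      refine Finset.monotone_filter_right _ ?_
      intro i _ hi
      show (∑ β, lam β * aCoef p β i) ≠ 1 / q
      by_contra h
      exact hi (by rw [hsum' i, h, htight' i h, mul_zero, add_zero])
    have hlt : (univ.filter fun β => lam' β ≠ 0).card
        + (univ.filter fun i : Fin d => (∑ β, lam' β * aCoef p β i) ≠ 1 / q).card < n := by
      rcases hevent with ⟨β, hβne, hβ0'⟩ | ⟨i, hine, hi0'⟩
      · have hstrict : (univ.filter fun β => lam' β ≠ 0) ⊂ J := by
          rw [Finset.ssubset_iff_of_subset hJsub]
          refine ⟨β, Finset.mem_filter.mpr ⟨Finset.mem_univ _, hβne⟩, fun h => ?_⟩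
          exact (Finset.mem_filter.mp h).2 (by rw [hlam']; exact hβ0')
        have h1 := Finset.card_lt_card hstrict
        have h2 := Finset.card_le_card hTsub
        omega
      · have hstrict : (univ.filter fun i : Fin d => (∑ β, lam' β * aCoef p β i) ≠ 1 / q)
            ⊂ (univ.filter fun i : Fin d => (∑ β, lam β * aCoef p β i) ≠ 1 / q) := by
          rw [Finset.ssubset_iff_of_subset hTsub]
          refine ⟨i, Finset.mem_filter.mpr ⟨Finset.mem_univ _, hine⟩, fun h => ?_⟩
          have := (Finset.mem_filter.mp h).2
          exact this (by rw [hsum' i, hi0'])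
        have h1 := Finset.card_lt_card hstrict
        have h2 := Finset.card_le_card hJsub
        omega
    obtain ⟨m, hm1, hmd, α, I, lamw, hw, hval⟩ :=
      IH ((univ.filter fun β => lam' β ≠ 0).card
        + (univ.filter fun i : Fin d => (∑ β, lam' β * aCoef p β i) ≠ 1 / q).card)
        hlt lam' hmem' hmin' le_rfl
    refine ⟨m, hm1, hmd, α, I, lamw, hw, ?_⟩
    rw [hval, heq']

lemma Psi_eq {d : ℕ} {A : Type*} [Fintype A] (p : A → Fin d → ℝ≥0∞) (ν : A → ℝ)
    (k : Fin d → ℕ) (q : ℝ) (hν : ∀ a, 0 < ν a) (hk : ∀ i, 1 ≤ k i)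
    (lam0 : A → ℝ) (h0 : lam0 ∈ stdSimplex ℝ A)
    (hmin : IsMinOn (Hfun p ν k q) (stdSimplex ℝ A) lam0) :
    Psi p ν k q = Real.exp (Hfun p ν k q lam0) := by
  apply IsLeast.csInf_eq
  constructor
  · obtain ⟨m, hm1, hmd, α, I, lamw, hw, hval⟩ :=
      exists_witness p ν k q hν hk _ lam0 h0 hmin le_rfl
    exact ⟨m, hm1, hmd, α, I, lamw, hw, hval.symm⟩
  · rintro r ⟨m, hm1, hmd, α, I, lamw, hw, rfl⟩
    obtain ⟨lam', hlam', heq⟩ := witness_value p ν k q hν hk α I lamw hw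
    rw [heq, Real.exp_le_exp]
    exact hmin hlam'

lemma Hdiff_bound {d : ℕ} {A : Type*} [Fintype A] (p p' : A → Fin d → ℝ≥0∞)
    (ν : A → ℝ) (k : Fin d → ℕ) (q : ℝ) (α0 : A)
    (hpp : ∀ b, b ≠ α0 → p' b = p b) (hk : ∀ i, 1 ≤ k i)
    (lam : A → ℝ) (hlam : lam ∈ stdSimplex ℝ A) :
    |Hfun p' ν k q lam - Hfun p ν k q lam|
      ≤ ∑ i, Real.log (k i) * |aCoef p' α0 i - aCoef p α0 i| := by
  have hlog : ∀ i, 0 ≤ Real.log (k i) := fun i =>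
    Real.log_nonneg (by exact_mod_cast hk i)
  have hlam01 : lam α0 ≤ 1 := by
    rw [← hlam.2]
    exact Finset.single_le_sum (fun β _ => hlam.1 β) (Finset.mem_univ α0)
  have hsdiff : ∀ i : Fin d, (∑ β, lam β * aCoef p' β i) - (∑ β, lam β * aCoef p β i)
      = lam α0 * (aCoef p' α0 i - aCoef p α0 i) := by
    intro i
    rw [← Finset.sum_sub_distrib]
    rw [Finset.sum_eq_single α0 (fun β _ hβ => by rw [aCoef, aCoef, hpp β hβ]; ring)
      (fun h => (h (Finset.mem_univ _)).elim)]
    ring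
  have hdiff : Hfun p' ν k q lam - Hfun p ν k q lam
      = ∑ i, Real.log (k i) * (max (1 / q - ∑ β, lam β * aCoef p' β i) 0
          - max (1 / q - ∑ β, lam β * aCoef p β i) 0) := by
    rw [Hfun, Hfun]
    rw [show ∀ a b c : ℝ, a + b - (a + c) = b - c from fun a b c => by ring]
    rw [← Finset.sum_sub_distrib]
    exact Finset.sum_congr rfl fun i _ => by ring
  rw [hdiff]
  refine (Finset.abs_sum_le_sum_abs _ _).trans (Finset.sum_le_sum fun i _ => ?_)
  rw [abs_mul, abs_of_nonneg (hlog i)]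
  refine mul_le_mul_of_nonneg_left ?_ (hlog i)
  refine (abs_max_sub_max_le_abs _ _ _).trans ?_
  rw [show (1 / q - ∑ β, lam β * aCoef p' β i) - (1 / q - ∑ β, lam β * aCoef p β i)
    = -((∑ β, lam β * aCoef p' β i) - (∑ β, lam β * aCoef p β i)) from by ring,
    abs_neg, hsdiff i, abs_mul, abs_of_nonneg (hlam.1 α0)]
  exact mul_le_of_le_one_left (abs_nonneg _) hlam01

lemma Hfun_continuous {d : ℕ} {A : Type*} [Fintype A] (P : A → Fin d → ℝ≥0∞)
    (ν : A → ℝ) (k : Fin d → ℕ) (q : ℝ) : Continuous (Hfun P ν k q) := by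
  show Continuous fun lam : A → ℝ => (∑ β, lam β * Real.log (ν β))
    + ∑ i, Real.log (k i) * max (1 / q - ∑ β, lam β * aCoef P β i) 0
  apply Continuous.add
  · exact continuous_finset_sum _ fun β _ => (continuous_apply β).mul continuous_const
  · refine continuous_finset_sum _ fun i _ => continuous_const.mul ?_
    exact (continuous_const.sub (continuous_finset_sum _ fun β _ =>
      (continuous_apply β).mul continuous_const)).max continuous_const

lemma stdSimplex_ne {A : Type*} [Fintype A] [Nonempty A] :
    (stdSimplex ℝ A).Nonempty := by
  classical
  obtain ⟨a0⟩ := ‹Nonempty A›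
  refine ⟨fun β => if β = a0 then 1 else 0, fun β => by dsimp only; split <;> norm_num, ?_⟩
  rw [Finset.sum_ite_eq' Finset.univ a0 (fun _ => (1 : ℝ))]
  simp

/-- continuity of `Ψ` under perturbation of one exponent vector.
If `1/p̄_α^N → 1/p̄_α` coordinatewise and `p̄_β^N = p̄_β` for `β ≠ α`, then
`Ψ({p̄_β^N}, k̄, q) → Ψ({p̄_β}, k̄, q)`. -/
theorem statement13 (d : ℕ) (hd : 1 ≤ d) (k : Fin d → ℕ) (hk : ∀ i, 1 ≤ k i)
    (q : ℝ) (hq1 : 1 ≤ q) (hq2 : q ≤ 2)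
    (A : Type) [Fintype A] [Nonempty A]
    (ν : A → ℝ) (hν : ∀ a, 0 < ν a)
    (p : A → Fin d → ℝ≥0∞) (hp : ∀ a i, 1 ≤ p a i)
    (α : A) (pN : ℕ → A → Fin d → ℝ≥0∞)
    (hpN1 : ∀ N a i, 1 ≤ pN N a i)
    (hpNeq : ∀ N b, b ≠ α → pN N b = p b)
    (hconv : ∀ i, Tendsto (fun N => (1 / pN N α i).toReal) atTop
      (nhds (1 / p α i).toReal)) :
    Tendsto (fun N => Psi (pN N) ν k q) atTop (nhds (Psi p ν k q)) := by
  classical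
  have hne : (stdSimplex ℝ A).Nonempty := stdSimplex_ne
  obtain ⟨lam0, h0, hmin0⟩ := (isCompact_stdSimplex ℝ A).exists_isMinOn hne
    (Hfun_continuous p ν k q).continuousOn
  have hchoice : ∀ N, ∃ lam ∈ stdSimplex ℝ A,
      IsMinOn (Hfun (pN N) ν k q) (stdSimplex ℝ A) lam := fun N =>
    (isCompact_stdSimplex ℝ A).exists_isMinOn hne (Hfun_continuous (pN N) ν k q).continuousOn
  choose lamN hN1 hN2 using hchoice
  have hPsip : Psi p ν k q = Real.exp (Hfun p ν k q lam0) :=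
    Psi_eq p ν k q hν hk lam0 h0 hmin0
  have hPsiN : ∀ N, Psi (pN N) ν k q = Real.exp (Hfun (pN N) ν k q (lamN N)) :=
    fun N => Psi_eq (pN N) ν k q hν hk (lamN N) (hN1 N) (hN2 N)
  set B : ℕ → ℝ := fun N => ∑ i, Real.log (k i) * |aCoef (pN N) α i - aCoef p α i| with hB
  have hB0 : Filter.Tendsto B Filter.atTop (nhds 0) := by
    have h1 : ∀ i : Fin d, Filter.Tendsto
        (fun N => Real.log (k i) * |aCoef (pN N) α i - aCoef p α i|)
        Filter.atTop (nhds 0) := by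
      intro i
      have h2 := (hconv i).sub_const ((1 / p α i).toReal)
      rw [sub_self] at h2
      have h3 := h2.abs
      rw [abs_zero] at h3
      have h4 := h3.const_mul (Real.log (k i))
      rw [mul_zero] at h4
      exact h4
    have := tendsto_finset_sum Finset.univ (fun i _ => h1 i)
    simpa using this
  have hHbound : ∀ N, |Hfun (pN N) ν k q (lamN N) - Hfun p ν k q lam0| ≤ B N := by
    intro N
    have hb1 := Hdiff_bound p (pN N) ν k q α (fun b hb => hpNeq N b hb) hk lam0 h0
    have hb2 := Hdiff_bound p (pN N) ν k q α (fun b hb => hpNeq N b hb) hk (lamN N) (hN1 N)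
    have i1 : Hfun (pN N) ν k q (lamN N) ≤ Hfun (pN N) ν k q lam0 := hN2 N h0
    have i2 : Hfun p ν k q lam0 ≤ Hfun p ν k q (lamN N) := hmin0 (hN1 N)
    rw [abs_le] at hb1 hb2 ⊢
    constructor
    · linarith [hb2.1]
    · linarith [hb1.2]
  have hHtend : Filter.Tendsto (fun N => Hfun (pN N) ν k q (lamN N)) Filter.atTop
      (nhds (Hfun p ν k q lam0)) := by
    have hz : Filter.Tendsto (fun N => Hfun (pN N) ν k q (lamN N) - Hfun p ν k q lam0)
        Filter.atTop (nhds 0) := by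
      apply squeeze_zero_norm (fun N => ?_) hB0
      rw [Real.norm_eq_abs]
      exact hHbound N
    have := hz.add_const (Hfun p ν k q lam0)
    simpa using this
  have hfeq : (fun N => Psi (pN N) ν k q)
      = fun N => Real.exp (Hfun (pN N) ν k q (lamN N)) := funext hPsiN
  rw [hfeq, hPsip]
  exact (Real.continuous_exp.tendsto _).comp hHtend
end

section
/- Let d ∈ ℕ, 1 ≤ q ≤ 2, let A be a nonempty finite index set with p̄_β ∈ [1,∞]^d for β ∈ A, fix α ∈ A, and let p̄_α^N ∈ [1,∞]^d satisfy 1/p̄_α^N → 1/p̄_α coordinatewise as N → ∞; set p̄_β^N = p̄_β for β ≠ α. Suppose ᾱ = (α_1,…,α_m) ∈ 𝒩_m with respect to (p̄_β)_{β∈A}, with witnessing set I, weights λ_j(ᾱ,I) and vector θ̄(ᾱ,I), and with α_1 = α. Then for all sufficiently large N, ᾱ ∈ 𝒩_m^N (i.e., 𝒩_m with respect to (p̄_β^N)_{β∈A}) with the same witnessing set I, and the corresponding weights satisfy λ_j^N(ᾱ,I) → λ_j(ᾱ,I) for j = 1,…,m and 1/θ̄^N(ᾱ,I) → 1/θ̄(ᾱ,I)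 coordinatewise as N → ∞. -/
open scoped ENNReal BigOperators
open Filter Matrix

lemma affineIndep_iff_det_ne_zero {m' : ℕ} {ι : Type*} [Fintype ι] (e : Fin m' ≃ ι)
    (v : Fin (m' + 1) → ι → ℝ) :
    AffineIndependent ℝ v ↔
      (Matrix.of fun r j => (Fin.cons 1 fun r' => v j (e r') : Fin (m' + 1) → ℝ) r).det ≠ 0 := by
  set M : Matrix (Fin (m' + 1)) (Fin (m' + 1)) ℝ :=
    Matrix.of fun r j => (Fin.cons 1 fun r' => v j (e r') : Fin (m' + 1) → ℝ) r with hM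
  have hlin : LinearIndependent ℝ (fun j => Mᵀ j) ↔
      ∀ g : Fin (m' + 1) → ℝ, (∑ j, g j = 0) → (∀ i, ∑ j, g j * v j i = 0) →
        ∀ j, g j = 0 := by
    rw [Fintype.linearIndependent_iff]
    refine forall_congr' fun g => ?_
    have hc : (∑ j, g j • Mᵀ j = 0) ↔
        ((∑ j, g j = 0) ∧ ∀ i, ∑ j, g j * v j i = 0) := by
      constructor
      · intro h
        have h0 : ∀ r, ∑ j, g j * M r j = 0 := by
          intro r
          have := congrFun h r
          simpa [Finset.sum_apply] using this
        refine ⟨by simpa [hM] using h0 0, fun i => ?_⟩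
        have := h0 (Fin.succ (e.symm i))
        simpa [hM] using this
      · rintro ⟨h1, h2⟩
        funext r
        rw [Finset.sum_apply]
        refine Fin.cases ?_ (fun r' => ?_) r
        · simpa [hM] using h1
        · simpa [hM] using h2 (e r')
    rw [hc, and_imp]
  have hdetiff : M.det ≠ 0 ↔
      ∀ g : Fin (m' + 1) → ℝ, (∑ j, g j = 0) → (∀ i, ∑ j, g j * v j i = 0) →
        ∀ j, g j = 0 := by
    rw [← isUnit_iff_ne_zero, ← Matrix.isUnit_iff_isUnit_det,
      ← Matrix.linearIndependent_cols_iff_isUnit]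
    exact hlin
  rw [affineIndependent_iff_of_fintype, hdetiff]
  refine forall_congr' fun w => ?_
  constructor
  · intro H hw hv
    refine H hw ?_
    rw [Finset.univ.weightedVSub_eq_linear_combination hw]
    funext i
    simpa [Finset.sum_apply] using hv i
  · intro H hw hv
    refine H hw fun i => ?_
    rw [Finset.univ.weightedVSub_eq_linear_combination hw] at hv
    simpa [Finset.sum_apply] using congrFun hv i

/-- stability of `𝒩_m` membership under perturbation. If
`ᾱ ∈ 𝒩_m` w.r.t. `(p̄_β)` with witnessing set `I` and `α_1 = α`, and `1/p̄_α^N → 1/p̄_α`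
with `p̄_β^N = p̄_β` for `β ≠ α`, then for large `N` one has `ᾱ ∈ 𝒩_m^N` with the same
set `I`, and `λ_j^N → λ_j`, `1/θ̄^N(ᾱ,I) → 1/θ̄(ᾱ,I)`. -/
theorem statement14 (d : ℕ) (hd : 1 ≤ d)
    (q : ℝ) (hq1 : 1 ≤ q) (hq2 : q ≤ 2)
    (A : Type) [Fintype A] [Nonempty A]
    (p : A → Fin d → ℝ≥0∞) (hp : ∀ a i, 1 ≤ p a i)
    (α₀ : A) (pN : ℕ → A → Fin d → ℝ≥0∞)
    (hpN1 : ∀ N a i, 1 ≤ pN N a i)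
    (hpNeq : ∀ N b, b ≠ α₀ → pN N b = p b)
    (hconv : ∀ i, Tendsto (fun N => (1 / pN N α₀ i).toReal) atTop
      (nhds (1 / p α₀ i).toReal))
    (m : ℕ) (hm1 : 1 ≤ m) (hmd : m ≤ d + 1)
    (α : Fin m → A) (hα0 : α ⟨0, by omega⟩ = α₀)
    (I : Finset (Fin d)) (lam : Fin m → ℝ) (hwit : IsNWitness q p α I lam) :
    ∃ lamN : ℕ → Fin m → ℝ,
      (∀ᶠ N in atTop, IsNWitness q (pN N) α I (lamN N)) ∧
      (∀ j, Tendsto (fun N => lamN N j) atTop (nhds (lam j))) ∧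
      (∀ i, Tendsto (fun N => thetaRecip (pN N) α (lamN N) i) atTop
        (nhds (thetaRecip p α lam i))) := by
  classical
  -- replace m by m' + 1
  obtain ⟨m', rfl⟩ : ∃ m', m = m' + 1 := ⟨m - 1, by omega⟩
  obtain ⟨hI, hlampos, hlamsum, htheta, haff⟩ := hwit
  have hIcard : I.card = m' := by omega
  set e : Fin m' ≃ I := (I.orderIsoOfFin hIcard).toEquiv with he
  -- coordinate functions
  set a : ℕ → Fin (m' + 1) → Fin d → ℝ :=
    fun N j i => (1 / pN N (α j) i).toReal with ha
  set aL : Fin (m' + 1) → Fin d → ℝ := fun j i => (1 / p (α j) i).toReal with haL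
  have haconv : ∀ j i, Tendsto (fun N => a N j i) atTop (nhds (aL j i)) := by
    intro j i
    by_cases h : α j = α₀
    · rw [ha, haL]; simp only [h]; exact hconv i
    · have hc : ∀ N, pN N (α j) = p (α j) := fun N => hpNeq N _ h
      simp only [ha, haL, hc]
      exact tendsto_const_nhds
  -- matrices
  set M : ℕ → Matrix (Fin (m' + 1)) (Fin (m' + 1)) ℝ := fun N =>
    Matrix.of fun r j => (Fin.cons 1 fun r' => a N j (e r') : Fin (m' + 1) → ℝ) r with hMdef
  set ML : Matrix (Fin (m' + 1)) (Fin (m' + 1)) ℝ :=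
    Matrix.of fun r j => (Fin.cons 1 fun r' => aL j (e r') : Fin (m' + 1) → ℝ) r with hMLdef
  have hMconv : ∀ r j, Tendsto (fun N => M N r j) atTop (nhds (ML r j)) := by
    intro r j
    refine Fin.cases ?_ (fun r' => ?_) r
    · simp only [hMdef, hMLdef, Matrix.of_apply, Fin.cons_zero]; exact tendsto_const_nhds
    · simp only [hMdef, hMLdef, Matrix.of_apply, Fin.cons_succ]; exact haconv j _
  have hMconv' : Tendsto (fun N => M N) atTop (nhds ML) := by
    refine tendsto_pi_nhds.mpr fun r => ?_; rw [tendsto_pi_nhds]; intro j; exact hMconv r j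
  -- determinant of limit matrix is nonzero
  have hdetL : ML.det ≠ 0 := by
    have := (affineIndep_iff_det_ne_zero e
      (fun j => fun i : I => (1 / p (α j) (i : Fin d)).toReal)).mp haff
    exact this
  have hdetconv : Tendsto (fun N => (M N).det) atTop (nhds ML.det) :=
    ((continuous_id.matrix_det).tendsto ML).comp hMconv'
  have hadjconv : Tendsto (fun N => (M N).adjugate) atTop (nhds ML.adjugate) :=
    ((continuous_id.matrix_adjugate).tendsto ML).comp hMconv'
  -- the right-hand side vector
  set b : Fin (m' + 1) → ℝ := Fin.cons 1 fun _ => 1 / q with hb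
  -- the limit matrix equation
  have hMLlam : ML *ᵥ lam = b := by
    funext r
    refine Fin.cases ?_ (fun r' => ?_) r
    · simp only [Matrix.mulVec, dotProduct, hMLdef, Matrix.of_apply, Fin.cons_zero,
        one_mul, hb]
      exact hlamsum
    · have hmem : ((e r' : I) : Fin d) ∈ I := (e r').2
      have := htheta _ hmem
      simp only [Matrix.mulVec, dotProduct, hMLdef, Matrix.of_apply, Fin.cons_succ, hb]
      rw [← this, thetaRecip]
      exact Finset.sum_congr rfl fun j _ => mul_comm _ _
  -- definition of lamN
  set lamN : ℕ → Fin (m' + 1) → ℝ :=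
    fun N => (M N).det⁻¹ • ((M N).adjugate *ᵥ b) with hlamNdef
  -- limit identity
  have hlimval : ML.det⁻¹ • (ML.adjugate *ᵥ b) = lam := by
    have hMLinv : ML⁻¹ = ML.det⁻¹ • ML.adjugate := by
      rw [Matrix.inv_def, Ring.inverse_eq_inv]
    calc ML.det⁻¹ • (ML.adjugate *ᵥ b) = (ML.det⁻¹ • ML.adjugate) *ᵥ b := by
          rw [Matrix.smul_mulVec]
      _ = ML⁻¹ *ᵥ (ML *ᵥ lam) := by rw [hMLinv, hMLlam]
      _ = (ML⁻¹ * ML) *ᵥ lam := by rw [Matrix.mulVec_mulVec]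
      _ = lam := by rw [Matrix.nonsing_inv_mul ML (isUnit_iff_ne_zero.mpr hdetL),
            Matrix.one_mulVec]
  have hlim : ∀ j, Tendsto (fun N => lamN N j) atTop (nhds (lam j)) := by
    intro j
    have h1 : Tendsto (fun N => (M N).det⁻¹) atTop (nhds ML.det⁻¹) :=
      hdetconv.inv₀ hdetL
    have h2 : Tendsto (fun N => ((M N).adjugate *ᵥ b) j) atTop
        (nhds ((ML.adjugate *ᵥ b) j)) := by
      simp only [Matrix.mulVec, dotProduct]
      refine tendsto_finset_sum _ fun k _ => ?_
      exact Tendsto.mul (by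
        have := tendsto_pi_nhds.mp hadjconv
        have := this j; rw [tendsto_pi_nhds] at this
        exact this k) tendsto_const_nhds
    have := h1.mul h2
    rw [← hlimval]
    simpa [hlamNdef] using this
  -- eventual properties
  have hev : ∀ᶠ N in atTop, (M N).det ≠ 0 ∧ ∀ j, 0 < lamN N j := by
    refine (hdetconv.eventually_ne hdetL).and ?_
    rw [eventually_all]
    intro j
    exact (hlim j).eventually (eventually_gt_nhds (hlampos j))
  refine ⟨lamN, ?_, hlim, ?_⟩
  · filter_upwards [hev] with N hN
    obtain ⟨hdetN, hposN⟩ := hN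
    have hunit : IsUnit (M N).det := isUnit_iff_ne_zero.mpr hdetN
    have hMNlamN : M N *ᵥ lamN N = b := by
      have hinv : (M N)⁻¹ = (M N).det⁻¹ • (M N).adjugate := by
        rw [Matrix.inv_def, Ring.inverse_eq_inv]
      calc M N *ᵥ lamN N = M N *ᵥ ((M N)⁻¹ *ᵥ b) := by
            rw [hinv, Matrix.smul_mulVec]
        _ = (M N * (M N)⁻¹) *ᵥ b := by rw [Matrix.mulVec_mulVec]
        _ = b := by rw [Matrix.mul_nonsing_inv (M N) hunit, Matrix.one_mulVec]
    refine ⟨by omega, hposN, ?_, ?_, ?_⟩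
    · have := congrFun hMNlamN 0
      simpa [Matrix.mulVec, dotProduct, hMdef, hb] using this
    · intro i hi
      have := congrFun hMNlamN (Fin.succ (e.symm ⟨i, hi⟩))
      simp only [Matrix.mulVec, dotProduct, hMdef, Matrix.of_apply, Fin.cons_succ,
        hb, Fin.cons_succ, Equiv.apply_symm_apply] at this
      rw [thetaRecip, ← this]
      exact Finset.sum_congr rfl fun j _ => mul_comm _ _
    · exact (affineIndep_iff_det_ne_zero e
        (fun j => fun i : I => (1 / pN N (α j) (i : Fin d)).toReal)).mpr hdetN
  · intro i
    rw [thetaRecip]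
    have : ∀ N, thetaRecip (pN N) α (lamN N) i = ∑ j, lamN N j * a N j i := fun N => rfl
    simp only [this]
    exact tendsto_finset_sum _ fun j _ => (hlim j).mul (haconv j i)
end
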